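/- arXiv:1707.09691 — 6 statements merged into one kernel-verified Lean document; each statement's English description precedes it below -/
import Mathlib

section
/- Let C be a rigid monoidal category, D a monoidal category, and F, G : C → D strong monoidal functors. If (V, σ) is a Z(F,G)-pair, then every component σ_X : V ⊗ F(X) ⟶ G(X) ⊗ V (X ∈ C) is an isomorphism. -/
/-!
For strong monoidal functors `F G : C ⥤ D`, a `Z(F,G)`-pair is a pair `(V, σ)` of an
object `V : D` and a natural family `σ X : V ⊗ F(X) ⟶ G(X) ⊗ V` compatible with the
monoidal structures.  If `C` is rigid, every component `σ X` is an isomorphism.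
-/

open CategoryTheory MonoidalCategory Functor.LaxMonoidal

variable {C : Type*} [Category C] [MonoidalCategory C]
variable {D : Type*} [Category D] [MonoidalCategory D]

/-- `(V, σ)` is a `Z(F,G)`-pair: `σ` is natural and compatible with the units and
tensorators of `F` and `G` (associators and unitors of `D` inserted as needed). -/
structure IsZPair (F G : C ⥤ D) [F.Monoidal] [G.Monoidal] (V : D)
    (σ : ∀ X : C, V ⊗ F.obj X ⟶ G.obj X ⊗ V) : Prop where
  naturality : ∀ {X Y : C} (f : X ⟶ Y),
    (V ◁ F.map f) ≫ σ Y = σ X ≫ (G.map f ▷ V)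
  unit : (ρ_ V).inv ≫ (V ◁ ε F) ≫ σ (𝟙_ C) = (λ_ V).inv ≫ (ε G ▷ V)
  tensor : ∀ X Y : C,
    (σ X ▷ F.obj Y) ≫ (α_ (G.obj X) V (F.obj Y)).hom ≫ (G.obj X ◁ σ Y) ≫
        (α_ (G.obj X) (G.obj Y) V).inv ≫ (μ G X Y ▷ V) =
      (α_ V (F.obj X) (F.obj Y)).hom ≫ (V ◁ μ F X Y) ≫ σ (X ⊗ Y)


open Functor.OplaxMonoidal

lemma whiskerLeft_δ_assoc_μ (F : C ⥤ D) [F.Monoidal] (X Y Z : C) :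
    F.obj X ◁ δ F Y Z ≫ (α_ (F.obj X) (F.obj Y) (F.obj Z)).inv ≫ μ F X Y ▷ F.obj Z =
      μ F X (Y ⊗ Z) ≫ F.map (α_ X Y Z).inv ≫ δ F (X ⊗ Y) Z := by
  rw [← cancel_mono (μ F (X ⊗ Y) Z)]
  simp [← Functor.LaxMonoidal.associativity_inv]

lemma map_coevaluation_evaluation (F : C ⥤ D) [F.Monoidal] (A B : C) [ExactPairing A B] :
    F.obj B ◁ (ε F ≫ F.map (η_ A B) ≫ δ F A B) ≫ (α_ (F.obj B) (F.obj A) (F.obj B)).inv ≫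
      (μ F B A ≫ F.map (ε_ A B) ≫ η F) ▷ F.obj B = (ρ_ (F.obj B)).hom ≫ (λ_ (F.obj B)).inv := by
  simp only [MonoidalCategory.whiskerLeft_comp, comp_whiskerRight, Category.assoc]
  slice_lhs 3 5 => rw [whiskerLeft_δ_assoc_μ]
  slice_lhs 2 3 => rw [Functor.LaxMonoidal.μ_natural_right]
  slice_lhs 5 6 => rw [Functor.OplaxMonoidal.δ_natural_left]
  slice_lhs 3 5 => rw [← F.map_comp, ← F.map_comp, ExactPairing.coevaluation_evaluation]
  rw [F.map_comp]
  slice_lhs 1 3 => rw [← Functor.LaxMonoidal.right_unitality]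
  slice_lhs 2 4 => rw [← Functor.OplaxMonoidal.left_unitality]

section
variable (F G : C ⥤ D) [F.Monoidal] [G.Monoidal] (V : D)
  (σ : ∀ X : C, V ⊗ F.obj X ⟶ G.obj X ⊗ V)

/-- candidate inverse -/
noncomputable def zInv (A X : C) [ExactPairing A X] : G.obj X ⊗ V ⟶ V ⊗ F.obj X :=
  𝟙 (G.obj X ⊗ V) ⊗≫
    (G.obj X ⊗ V) ◁ (ε F ≫ F.map (η_ A X) ≫ δ F A X) ⊗≫
    G.obj X ◁ (σ A ▷ F.obj X) ⊗≫
    ((μ G X A ≫ G.map (ε_ A X) ≫ η G) ▷ (V ⊗ F.obj X)) ⊗≫ 𝟙 (V ⊗ F.obj X)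

end



section
variable {F G : C ⥤ D} [F.Monoidal] [G.Monoidal] {V : D}
  {σ : ∀ X : C, V ⊗ F.obj X ⟶ G.obj X ⊗ V}

lemma IsZPair.unit' (h : IsZPair F G V σ) :
    σ (𝟙_ C) = (V ◁ η F) ≫ (ρ_ V).hom ≫ (λ_ V).inv ≫ (ε G ▷ V) := by
  calc σ (𝟙_ C) = (V ◁ η F) ≫ (V ◁ ε F) ≫ σ (𝟙_ C) := by
        rw [Functor.Monoidal.whiskerLeft_η_ε_assoc]
    _ = (V ◁ η F) ≫ (ρ_ V).hom ≫ ((ρ_ V).inv ≫ (V ◁ ε F) ≫ σ (𝟙_ C)) := by simp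
    _ = _ := by rw [h.unit]

lemma sigma_comp_zInv (h : IsZPair F G V σ) (A X : C) [ExactPairing A X] :
    σ X ≫ zInv F G V σ A X = 𝟙 (V ⊗ F.obj X) := by
  calc σ X ≫ zInv F G V σ A X
      = 𝟙 (V ⊗ F.obj X) ⊗≫ (σ X ▷ 𝟙_ D ≫ (G.obj X ⊗ V) ◁ (ε F ≫ F.map (η_ A X) ≫ δ F A X)) ⊗≫
          G.obj X ◁ (σ A ▷ F.obj X) ⊗≫
          ((μ G X A ≫ G.map (ε_ A X) ≫ η G) ▷ (V ⊗ F.obj X)) ⊗≫ 𝟙 (V ⊗ F.obj X) := by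
        dsimp only [zInv]; monoidal
    _ = 𝟙 (V ⊗ F.obj X) ⊗≫ ((V ⊗ F.obj X) ◁ (ε F ≫ F.map (η_ A X) ≫ δ F A X) ≫
          σ X ▷ (F.obj A ⊗ F.obj X)) ⊗≫
          G.obj X ◁ (σ A ▷ F.obj X) ⊗≫
          ((μ G X A ≫ G.map (ε_ A X) ≫ η G) ▷ (V ⊗ F.obj X)) ⊗≫ 𝟙 (V ⊗ F.obj X) := by
        rw [← whisker_exchange]
    _ = 𝟙 (V ⊗ F.obj X) ⊗≫ (V ⊗ F.obj X) ◁ (ε F ≫ F.map (η_ A X) ≫ δ F A X) ⊗≫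
          ((σ X ▷ F.obj A ≫ (α_ (G.obj X) V (F.obj A)).hom ≫ G.obj X ◁ σ A ≫
            (α_ (G.obj X) (G.obj A) V).inv ≫ μ G X A ▷ V) ▷ F.obj X) ⊗≫
          (G.map (ε_ A X) ▷ (V ⊗ F.obj X)) ⊗≫ (η G ▷ (V ⊗ F.obj X)) ⊗≫ 𝟙 (V ⊗ F.obj X) := by
        monoidal
    _ = 𝟙 (V ⊗ F.obj X) ⊗≫ (V ⊗ F.obj X) ◁ (ε F ≫ F.map (η_ A X) ≫ δ F A X) ⊗≫
          (((α_ V (F.obj X) (F.obj A)).hom ≫ V ◁ μ F X A ≫ σ (X ⊗ A)) ▷ F.obj X) ⊗≫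
          (G.map (ε_ A X) ▷ (V ⊗ F.obj X)) ⊗≫ (η G ▷ (V ⊗ F.obj X)) ⊗≫ 𝟙 (V ⊗ F.obj X) := by
        rw [h.tensor X A]
    _ = 𝟙 (V ⊗ F.obj X) ⊗≫ (V ⊗ F.obj X) ◁ (ε F ≫ F.map (η_ A X) ≫ δ F A X) ⊗≫
          ((V ◁ μ F X A) ▷ F.obj X) ⊗≫
          ((σ (X ⊗ A) ≫ G.map (ε_ A X) ▷ V) ▷ F.obj X) ⊗≫
          (η G ▷ (V ⊗ F.obj X)) ⊗≫ 𝟙 (V ⊗ F.obj X) := by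
        monoidal
    _ = 𝟙 (V ⊗ F.obj X) ⊗≫ (V ⊗ F.obj X) ◁ (ε F ≫ F.map (η_ A X) ≫ δ F A X) ⊗≫
          ((V ◁ μ F X A) ▷ F.obj X) ⊗≫
          ((V ◁ F.map (ε_ A X) ≫ σ (𝟙_ C)) ▷ F.obj X) ⊗≫
          (η G ▷ (V ⊗ F.obj X)) ⊗≫ 𝟙 (V ⊗ F.obj X) := by
        rw [← h.naturality]
    _ = 𝟙 (V ⊗ F.obj X) ⊗≫ (V ⊗ F.obj X) ◁ (ε F ≫ F.map (η_ A X) ≫ δ F A X) ⊗≫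
          ((V ◁ μ F X A) ▷ F.obj X) ⊗≫
          ((V ◁ F.map (ε_ A X) ≫ (V ◁ η F) ≫ (ρ_ V).hom ≫ (λ_ V).inv ≫ (ε G ▷ V)) ▷ F.obj X) ⊗≫
          (η G ▷ (V ⊗ F.obj X)) ⊗≫ 𝟙 (V ⊗ F.obj X) := by
        rw [h.unit']
    _ = 𝟙 (V ⊗ F.obj X) ⊗≫
          V ◁ (F.obj X ◁ (ε F ≫ F.map (η_ A X) ≫ δ F A X) ≫
            (α_ (F.obj X) (F.obj A) (F.obj X)).inv ≫
            (μ F X A ≫ F.map (ε_ A X) ≫ η F) ▷ F.obj X) ⊗≫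
          (ε G ▷ (V ⊗ F.obj X) ≫ η G ▷ (V ⊗ F.obj X)) ⊗≫ 𝟙 (V ⊗ F.obj X) := by
        monoidal
    _ = 𝟙 (V ⊗ F.obj X) ⊗≫
          V ◁ ((ρ_ (F.obj X)).hom ≫ (λ_ (F.obj X)).inv) ⊗≫ 𝟙 (V ⊗ F.obj X) := by
        rw [map_coevaluation_evaluation F A X, Functor.Monoidal.whiskerRight_ε_η]
        monoidal
    _ = 𝟙 (V ⊗ F.obj X) := by monoidal

end

section
variable {F G : C ⥤ D} [F.Monoidal] [G.Monoidal] {V : D}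
  {σ : ∀ X : C, V ⊗ F.obj X ⟶ G.obj X ⊗ V}

lemma zInv_comp_sigma (h : IsZPair F G V σ) (A X : C) [ExactPairing A X] :
    zInv F G V σ A X ≫ σ X = 𝟙 (G.obj X ⊗ V) := by
  have key2 : σ A ▷ F.obj X ≫ (α_ (G.obj A) V (F.obj X)).hom ≫ G.obj A ◁ σ X =
      (α_ V (F.obj A) (F.obj X)).hom ≫ V ◁ μ F A X ≫ σ (A ⊗ X) ≫ δ G A X ▷ V ≫
        (α_ (G.obj A) (G.obj X) V).hom := by
    rw [← cancel_mono ((α_ (G.obj A) (G.obj X) V).inv), ← cancel_mono (μ G A X ▷ V)]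
    simpa using h.tensor A X
  calc zInv F G V σ A X ≫ σ X
      = 𝟙 (G.obj X ⊗ V) ⊗≫ (G.obj X ⊗ V) ◁ (ε F ≫ F.map (η_ A X) ≫ δ F A X) ⊗≫
          G.obj X ◁ (σ A ▷ F.obj X) ⊗≫
          ((μ G X A ≫ G.map (ε_ A X) ≫ η G) ▷ (V ⊗ F.obj X) ≫ 𝟙_ D ◁ σ X) ⊗≫
          𝟙 (G.obj X ⊗ V) := by
        dsimp only [zInv]; monoidal
    _ = 𝟙 (G.obj X ⊗ V) ⊗≫ (G.obj X ⊗ V) ◁ (ε F ≫ F.map (η_ A X) ≫ δ F A X) ⊗≫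
          G.obj X ◁ (σ A ▷ F.obj X) ⊗≫
          ((G.obj X ⊗ G.obj A) ◁ σ X ≫ (μ G X A ≫ G.map (ε_ A X) ≫ η G) ▷ (G.obj X ⊗ V)) ⊗≫
          𝟙 (G.obj X ⊗ V) := by
        rw [← whisker_exchange]
    _ = 𝟙 (G.obj X ⊗ V) ⊗≫ (G.obj X ⊗ V) ◁ (ε F ≫ F.map (η_ A X) ≫ δ F A X) ⊗≫
          G.obj X ◁ (σ A ▷ F.obj X ≫ (α_ (G.obj A) V (F.obj X)).hom ≫ G.obj A ◁ σ X) ⊗≫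
          ((μ G X A ≫ G.map (ε_ A X) ≫ η G) ▷ (G.obj X ⊗ V)) ⊗≫ 𝟙 (G.obj X ⊗ V) := by
        monoidal
    _ = 𝟙 (G.obj X ⊗ V) ⊗≫ (G.obj X ⊗ V) ◁ (ε F ≫ F.map (η_ A X) ≫ δ F A X) ⊗≫
          G.obj X ◁ ((α_ V (F.obj A) (F.obj X)).hom ≫ V ◁ μ F A X ≫ σ (A ⊗ X) ≫
            δ G A X ▷ V ≫ (α_ (G.obj A) (G.obj X) V).hom) ⊗≫
          ((μ G X A ≫ G.map (ε_ A X) ≫ η G) ▷ (G.obj X ⊗ V)) ⊗≫ 𝟙 (G.obj X ⊗ V) := by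
        rw [key2]
    _ = 𝟙 (G.obj X ⊗ V) ⊗≫ (G.obj X ⊗ V) ◁ (ε F ≫ F.map (η_ A X)) ⊗≫
          G.obj X ◁ V ◁ (δ F A X ≫ μ F A X) ⊗≫
          G.obj X ◁ (σ (A ⊗ X) ≫ δ G A X ▷ V) ⊗≫
          ((μ G X A ≫ G.map (ε_ A X) ≫ η G) ▷ (G.obj X ⊗ V)) ⊗≫ 𝟙 (G.obj X ⊗ V) := by
        monoidal
    _ = 𝟙 (G.obj X ⊗ V) ⊗≫ (G.obj X ⊗ V) ◁ ε F ⊗≫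
          G.obj X ◁ (V ◁ F.map (η_ A X) ≫ σ (A ⊗ X)) ⊗≫
          G.obj X ◁ (δ G A X ▷ V) ⊗≫
          ((μ G X A ≫ G.map (ε_ A X) ≫ η G) ▷ (G.obj X ⊗ V)) ⊗≫ 𝟙 (G.obj X ⊗ V) := by
        rw [Functor.Monoidal.δ_μ]; monoidal
    _ = 𝟙 (G.obj X ⊗ V) ⊗≫ (G.obj X ⊗ V) ◁ ε F ⊗≫
          G.obj X ◁ (σ (𝟙_ C) ≫ G.map (η_ A X) ▷ V) ⊗≫
          G.obj X ◁ (δ G A X ▷ V) ⊗≫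
          ((μ G X A ≫ G.map (ε_ A X) ≫ η G) ▷ (G.obj X ⊗ V)) ⊗≫ 𝟙 (G.obj X ⊗ V) := by
        rw [h.naturality]
    _ = 𝟙 (G.obj X ⊗ V) ⊗≫
          G.obj X ◁ ((ρ_ V).inv ≫ (V ◁ ε F) ≫ σ (𝟙_ C)) ⊗≫
          G.obj X ◁ (G.map (η_ A X) ▷ V) ⊗≫
          G.obj X ◁ (δ G A X ▷ V) ⊗≫
          ((μ G X A ≫ G.map (ε_ A X) ≫ η G) ▷ (G.obj X ⊗ V)) ⊗≫ 𝟙 (G.obj X ⊗ V) := by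
        monoidal
    _ = 𝟙 (G.obj X ⊗ V) ⊗≫
          G.obj X ◁ ((λ_ V).inv ≫ (ε G ▷ V)) ⊗≫
          G.obj X ◁ (G.map (η_ A X) ▷ V) ⊗≫
          G.obj X ◁ (δ G A X ▷ V) ⊗≫
          ((μ G X A ≫ G.map (ε_ A X) ≫ η G) ▷ (G.obj X ⊗ V)) ⊗≫ 𝟙 (G.obj X ⊗ V) := by
        rw [h.unit]
    _ = 𝟙 (G.obj X ⊗ V) ⊗≫
          ((G.obj X ◁ (ε G ≫ G.map (η_ A X) ≫ δ G A X) ≫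
            (α_ (G.obj X) (G.obj A) (G.obj X)).inv ≫
            (μ G X A ≫ G.map (ε_ A X) ≫ η G) ▷ G.obj X) ▷ V) ⊗≫ 𝟙 (G.obj X ⊗ V) := by
        monoidal
    _ = 𝟙 (G.obj X ⊗ V) ⊗≫
          (((ρ_ (G.obj X)).hom ≫ (λ_ (G.obj X)).inv) ▷ V) ⊗≫ 𝟙 (G.obj X ⊗ V) := by
        rw [map_coevaluation_evaluation G A X]
    _ = 𝟙 (G.obj X ⊗ V) := by monoidal

end


/-- If `C` is rigid, every component of the half-braiding of a `Z(F,G)`-pair is an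
isomorphism. -/
theorem IsZPair.isIso_sigma [RigidCategory C]
    (F G : C ⥤ D) [F.Monoidal] [G.Monoidal] (V : D)
    (σ : ∀ X : C, V ⊗ F.obj X ⟶ G.obj X ⊗ V)
    (h : IsZPair F G V σ) (X : C) : IsIso (σ X) :=
  ⟨zInv F G V σ (ᘁX) X, sigma_comp_zInv h (ᘁX) X, zInv_comp_sigma h (ᘁX) X⟩
end

section
/- Let C and D be rigid monoidal categories and F, G : C → D strong monoidal functors. Let (V, σ_V) be a Z(F,G)-pair, and assume each σ_V(X) is invertible. Define σ_{V^*}(X) : V^* ⊗ G(X) ⟶ F(X) ⊗ V^* as the composite (eval_V ⊗ id_{F(X)} ⊗ id_{V^*}) ∘ (id_{V^*} ⊗ σ_V(X)^{-1} ⊗ id_{V^*}) ∘ (id_{V^*} ⊗ id_{G(X)} ⊗ coev_V), with associators inserted as needed. Then: (a) (V^*, σ_{V^*}) is a Z(G,F)-pair; (b) the evaluation eval_V : V^* ⊗ V ⟶ 𝟙 intertwines the composed half-braidings, i.e. modulo associators and unitors, (id_{F(X)} ⊗ eval_V) ∘ (σ_{V^*}(X) ⊗ id_V) ∘ (id_{V^*}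 ⊗ σ_V(X)) = eval_V ⊗ id_{F(X)} for all X ∈ C; and (c) the coevaluation coev_V : 𝟙 ⟶ V ⊗ V^* satisfies, modulo associators and unitors, (σ_V(X) ⊗ id_{V^*}) ∘ (id_V ⊗ σ_{V^*}(X)) ∘ (coev_V ⊗ id_{G(X)}) = id_{G(X)} ⊗ coev_V for all X ∈ C. Hence (V^*, σ_{V^*}), together with eval_V and coev_V, is a left dual of (V, σ_V). -/
/-!
For strong monoidal functors `F G : C ⥤ D` between rigid monoidal categories and a
`Z(F,G)`-pair `(V, σ)` with each `σ X` invertible, the left dual `Vᘁ` carries a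
half-braiding `σ*` making `(Vᘁ, σ*)` a `Z(G,F)`-pair, and the evaluation and
coevaluation of `V` intertwine the composed half-braidings; hence `(Vᘁ, σ*)`,
together with `ε_ V Vᘁ` and `η_ V Vᘁ`, is a left dual of `(V, σ)`.

(Here we follow Mathlib's conventions: the dual written `X^*` in the paper, with
evaluation `X^* ⊗ X ⟶ 𝟙` and coevaluation `𝟙 ⟶ X ⊗ X^*`, is Mathlib's right dual
`Xᘁ`, with `ε_ X Xᘁ : Xᘁ ⊗ X ⟶ 𝟙` and `η_ X Xᘁ : 𝟙 ⟶ X ⊗ Xᘁ`.)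
-/

open CategoryTheory MonoidalCategory Functor.LaxMonoidal

variable {C : Type*} [Category C] [MonoidalCategory C]
variable {D : Type*} [Category D] [MonoidalCategory D]

/-- The half-braiding `σ*` on the dual `Vᘁ`:
`σ*_X = (eval_V ⊗ id ⊗ id) ∘ (id ⊗ σ_X⁻¹ ⊗ id) ∘ (id ⊗ id ⊗ coev_V)`. -/
noncomputable def dualSigma (F G : C ⥤ D) [F.Monoidal] [G.Monoidal]
    (V : D) [HasRightDual V] (σ : ∀ X : C, V ⊗ F.obj X ⟶ G.obj X ⊗ V)
    [∀ X, IsIso (σ X)] (X : C) : Vᘁ ⊗ G.obj X ⟶ F.obj X ⊗ Vᘁ :=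
  (ρ_ (Vᘁ ⊗ G.obj X)).inv ≫ ((Vᘁ ⊗ G.obj X) ◁ η_ V (Vᘁ)) ≫
    (α_ (Vᘁ ⊗ G.obj X) V (Vᘁ)).inv ≫ ((α_ (Vᘁ) (G.obj X) V).hom ▷ (Vᘁ)) ≫
    (((Vᘁ) ◁ inv (σ X)) ▷ (Vᘁ)) ≫ ((α_ (Vᘁ) V (F.obj X)).inv ▷ (Vᘁ)) ≫
    ((ε_ V (Vᘁ) ▷ F.obj X) ▷ (Vᘁ)) ≫ ((λ_ (F.obj X)).hom ▷ (Vᘁ))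

section Aux

variable (F G : C ⥤ D) [F.Monoidal] [G.Monoidal]
variable (V : D) [HasRightDual V] (σ : ∀ X : C, V ⊗ F.obj X ⟶ G.obj X ⊗ V) [∀ X, IsIso (σ X)]

/-- The map whose "string-pull" is `dualSigma`. -/
noncomputable def auxF (X : C) : (Vᘁ ⊗ G.obj X) ⊗ V ⟶ F.obj X :=
  (α_ (Vᘁ) (G.obj X) V).hom ≫ ((Vᘁ) ◁ inv (σ X)) ≫ (α_ (Vᘁ) V (F.obj X)).inv ≫
    (ε_ V (Vᘁ) ▷ F.obj X) ≫ (λ_ (F.obj X)).hom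

lemma dualSigma_eq (X : C) :
    dualSigma F G V σ X = (tensorRightHomEquiv (Vᘁ ⊗ G.obj X) V (Vᘁ) (F.obj X)) (auxF F G V σ X) := by
  simp [dualSigma, tensorRightHomEquiv, auxF]

lemma dualSigma_symm_eq (X : C) :
    (tensorRightHomEquiv (Vᘁ ⊗ G.obj X) V (Vᘁ) (F.obj X)).symm (dualSigma F G V σ X) =
      auxF F G V σ X := by
  rw [dualSigma_eq]; exact Equiv.symm_apply_apply _ _

/-- key characterization of `dualSigma` -/
lemma dualSigma_eval (X : C) :
    (dualSigma F G V σ X ▷ V) ≫ (α_ (F.obj X) (Vᘁ) V).hom ≫ (F.obj X ◁ ε_ V (Vᘁ)) ≫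
        (ρ_ (F.obj X)).hom =
      (α_ (Vᘁ) (G.obj X) V).hom ≫ ((Vᘁ) ◁ inv (σ X)) ≫ (α_ (Vᘁ) V (F.obj X)).inv ≫
        (ε_ V (Vᘁ) ▷ F.obj X) ≫ (λ_ (F.obj X)).hom :=
  dualSigma_symm_eq F G V σ X

lemma E_inj {A B : D} (g h : A ⟶ B ⊗ (Vᘁ))
    (w : (g ▷ V) ≫ (α_ B (Vᘁ) V).hom ≫ (B ◁ ε_ V (Vᘁ)) ≫ (ρ_ B).hom =
      (h ▷ V) ≫ (α_ B (Vᘁ) V).hom ≫ (B ◁ ε_ V (Vᘁ)) ≫ (ρ_ B).hom) : g = h :=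
  (tensorRightHomEquiv A V (Vᘁ) B).symm.injective w

end Aux

set_option linter.unusedSectionVars false
section Inv
variable (F G : C ⥤ D) [F.Monoidal] [G.Monoidal]
variable (V : D) [HasRightDual V] {σ : ∀ X : C, V ⊗ F.obj X ⟶ G.obj X ⊗ V} [∀ X, IsIso (σ X)]
variable (h : IsZPair F G V σ)
include h

lemma inv_naturality {X Y : C} (f : X ⟶ Y) :
    (G.map f ▷ V) ≫ inv (σ Y) = inv (σ X) ≫ (V ◁ F.map f) := by
  rw [IsIso.eq_inv_comp, ← Category.assoc, ← h.naturality, Category.assoc, IsIso.hom_inv_id,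
    Category.comp_id]

lemma inv_unit :
    (λ_ V).inv ≫ (ε G ▷ V) ≫ inv (σ (𝟙_ C)) = (ρ_ V).inv ≫ (V ◁ ε F) := by
  rw [← Category.assoc, ← h.unit]; simp

lemma inv_tensor (X Y : C) :
    (μ G X Y ▷ V) ≫ inv (σ (X ⊗ Y)) =
      (α_ (G.obj X) (G.obj Y) V).hom ≫ (G.obj X ◁ inv (σ Y)) ≫
        (α_ (G.obj X) V (F.obj Y)).inv ≫ (inv (σ X) ▷ F.obj Y) ≫
        (α_ V (F.obj X) (F.obj Y)).hom ≫ (V ◁ μ F X Y) := by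
  rw [← cancel_mono (σ (X ⊗ Y))]
  simp only [Category.assoc, IsIso.inv_hom_id, Category.comp_id]
  rw [← h.tensor X Y]
  simp [← comp_whiskerRight_assoc, ← MonoidalCategory.whiskerLeft_comp_assoc]
end Inv

section BC
variable (F G : C ⥤ D) [F.Monoidal] [G.Monoidal]
variable (V : D) [HasRightDual V] (σ : ∀ X : C, V ⊗ F.obj X ⟶ G.obj X ⊗ V) [∀ X, IsIso (σ X)]

lemma part_b (X : C) :
    (α_ (Vᘁ) V (F.obj X)).hom ≫ ((Vᘁ) ◁ σ X) ≫ (α_ (Vᘁ) (G.obj X) V).inv ≫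
        (dualSigma F G V σ X ▷ V) ≫ (α_ (F.obj X) (Vᘁ) V).hom ≫
        (F.obj X ◁ ε_ V (Vᘁ)) ≫ (ρ_ (F.obj X)).hom =
      (ε_ V (Vᘁ) ▷ F.obj X) ≫ (λ_ (F.obj X)).hom := by
  rw [dualSigma_eval]
  simp [← MonoidalCategory.whiskerLeft_comp_assoc]

lemma part_c (X : C) :
    (λ_ (G.obj X)).inv ≫ (η_ V (Vᘁ) ▷ G.obj X) ≫ (α_ V (Vᘁ) (G.obj X)).hom ≫
        (V ◁ dualSigma F G V σ X) ≫ (α_ V (F.obj X) (Vᘁ)).inv ≫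
        (σ X ▷ (Vᘁ)) ≫ (α_ (G.obj X) V (Vᘁ)).hom =
      (ρ_ (G.obj X)).inv ≫ (G.obj X ◁ η_ V (Vᘁ)) := by
  simp only [dualSigma]
  calc (λ_ (G.obj X)).inv ≫ (η_ V (Vᘁ) ▷ G.obj X) ≫ (α_ V (Vᘁ) (G.obj X)).hom ≫
        (V ◁ ((ρ_ (Vᘁ ⊗ G.obj X)).inv ≫ ((Vᘁ ⊗ G.obj X) ◁ η_ V (Vᘁ)) ≫
          (α_ (Vᘁ ⊗ G.obj X) V (Vᘁ)).inv ≫ ((α_ (Vᘁ) (G.obj X) V).hom ▷ (Vᘁ)) ≫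
          (((Vᘁ) ◁ inv (σ X)) ▷ (Vᘁ)) ≫ ((α_ (Vᘁ) V (F.obj X)).inv ▷ (Vᘁ)) ≫
          ((ε_ V (Vᘁ) ▷ F.obj X) ▷ (Vᘁ)) ≫ ((λ_ (F.obj X)).hom ▷ (Vᘁ)))) ≫
        (α_ V (F.obj X) (Vᘁ)).inv ≫ (σ X ▷ (Vᘁ)) ≫ (α_ (G.obj X) V (Vᘁ)).hom
      = 𝟙 _ ⊗≫ (η_ V (Vᘁ) ▷ G.obj X ≫ (V ⊗ (Vᘁ)) ◁ ((ρ_ (G.obj X)).inv ≫ G.obj X ◁ η_ V (Vᘁ))) ⊗≫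
        (V ◁ ((((Vᘁ) : D) ◁ inv (σ X)) ▷ ((Vᘁ) : D))) ⊗≫ (V ◁ ((ε_ V (Vᘁ) ▷ F.obj X) ▷ (Vᘁ))) ⊗≫
        (σ X ▷ (Vᘁ)) ⊗≫ 𝟙 _ := by
        monoidal
    _ = 𝟙 _ ⊗≫ (G.obj X ◁ η_ V (Vᘁ)) ⊗≫
        (η_ V (Vᘁ) ▷ ((G.obj X ⊗ V) ⊗ (Vᘁ)) ≫ (V ⊗ (Vᘁ)) ◁ (inv (σ X) ▷ (Vᘁ))) ⊗≫
        (V ◁ ((ε_ V (Vᘁ) ▷ F.obj X) ▷ (Vᘁ))) ⊗≫ (σ X ▷ (Vᘁ)) ⊗≫ 𝟙 _ := by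
        rw [← whisker_exchange]; monoidal
    _ = 𝟙 _ ⊗≫ (G.obj X ◁ η_ V (Vᘁ)) ⊗≫ (inv (σ X) ▷ (Vᘁ)) ⊗≫
        (((η_ V (Vᘁ) ▷ V) ≫ (α_ V (Vᘁ) V).hom ≫ (V ◁ ε_ V (Vᘁ))) ▷ (F.obj X ⊗ (Vᘁ))) ⊗≫
        (σ X ▷ (Vᘁ)) ⊗≫ 𝟙 _ := by
        rw [← whisker_exchange]; monoidal
    _ = 𝟙 _ ⊗≫ (G.obj X ◁ η_ V (Vᘁ)) ⊗≫ ((inv (σ X) ≫ σ X) ▷ (Vᘁ)) ⊗≫ 𝟙 _ := by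
        rw [ExactPairing.evaluation_coevaluation]; monoidal
    _ = (ρ_ (G.obj X)).inv ≫ (G.obj X ◁ η_ V (Vᘁ)) := by
        rw [IsIso.inv_hom_id]; monoidal
end BC

set_option maxHeartbeats 1000000
section A
variable (F G : C ⥤ D) [F.Monoidal] [G.Monoidal]
variable (V : D) [HasRightDual V] {σ : ∀ X : C, V ⊗ F.obj X ⟶ G.obj X ⊗ V} [∀ X, IsIso (σ X)]
variable (h : IsZPair F G V σ)
include h

lemma dual_naturality {X Y : C} (f : X ⟶ Y) :
    (((Vᘁ) : D) ◁ G.map f) ≫ dualSigma F G V σ Y = dualSigma F G V σ X ≫ (F.map f ▷ (Vᘁ)) := by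
  apply E_inj V
  calc (((((Vᘁ) : D) ◁ G.map f) ≫ dualSigma F G V σ Y) ▷ V) ≫ (α_ _ _ _).hom ≫
        (F.obj Y ◁ ε_ V (Vᘁ)) ≫ (ρ_ _).hom
      = ((((Vᘁ) : D) ◁ G.map f) ▷ V) ≫ ((dualSigma F G V σ Y ▷ V) ≫ (α_ _ _ _).hom ≫
          (F.obj Y ◁ ε_ V (Vᘁ)) ≫ (ρ_ _).hom) := by simp
    _ = ((((Vᘁ) : D) ◁ G.map f) ▷ V) ≫ ((α_ _ _ _).hom ≫ (((Vᘁ) : D) ◁ inv (σ Y)) ≫ (α_ _ _ _).inv ≫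
          (ε_ V (Vᘁ) ▷ F.obj Y) ≫ (λ_ _).hom) := by rw [dualSigma_eval]
    _ = 𝟙 _ ⊗≫ (((Vᘁ) : D) ◁ (G.map f ▷ V ≫ inv (σ Y))) ⊗≫ (ε_ V (Vᘁ) ▷ F.obj Y) ⊗≫ 𝟙 _ := by
          monoidal
    _ = 𝟙 _ ⊗≫ (((Vᘁ) : D) ◁ (inv (σ X) ≫ (V ◁ F.map f))) ⊗≫ (ε_ V (Vᘁ) ▷ F.obj Y) ⊗≫ 𝟙 _ := by
          rw [inv_naturality F G V h f]
    _ = 𝟙 _ ⊗≫ (((Vᘁ) : D) ◁ inv (σ X)) ⊗≫ ((((((Vᘁ) : D) ⊗ V : D)) ◁ F.map f) ≫ (ε_ V (Vᘁ) ▷ F.obj Y)) ⊗≫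
          𝟙 _ := by monoidal
    _ = 𝟙 _ ⊗≫ (((Vᘁ) : D) ◁ inv (σ X)) ⊗≫ ((ε_ V (Vᘁ) ▷ F.obj X) ≫ (𝟙_ D ◁ F.map f)) ⊗≫ 𝟙 _ := by
          rw [whisker_exchange]
    _ = ((α_ _ _ _).hom ≫ (((Vᘁ) : D) ◁ inv (σ X)) ≫ (α_ _ _ _).inv ≫ (ε_ V (Vᘁ) ▷ F.obj X) ≫
          (λ_ _).hom) ≫ F.map f := by monoidal
    _ = ((dualSigma F G V σ X ▷ V) ≫ (α_ _ _ _).hom ≫ (F.obj X ◁ ε_ V (Vᘁ)) ≫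
          (ρ_ _).hom) ≫ F.map f := by rw [dualSigma_eval]
    _ = 𝟙 _ ⊗≫ ((dualSigma F G V σ X ▷ V) ≫ (α_ _ _ _).hom) ⊗≫
          ((F.obj X ◁ ε_ V (Vᘁ)) ≫ (F.map f ▷ 𝟙_ D)) ⊗≫ 𝟙 _ := by monoidal
    _ = 𝟙 _ ⊗≫ ((dualSigma F G V σ X ▷ V) ≫ (α_ _ _ _).hom) ⊗≫
          ((F.map f ▷ (((Vᘁ) : D) ⊗ V)) ≫ (F.obj Y ◁ ε_ V (Vᘁ))) ⊗≫ 𝟙 _ := by rw [whisker_exchange]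
    _ = ((dualSigma F G V σ X ≫ (F.map f ▷ (Vᘁ))) ▷ V) ≫ (α_ _ _ _).hom ≫
          (F.obj Y ◁ ε_ V (Vᘁ)) ≫ (ρ_ _).hom := by monoidal

lemma dual_unit :
    (ρ_ ((Vᘁ) : D)).inv ≫ (((Vᘁ) : D) ◁ ε G) ≫ dualSigma F G V σ (𝟙_ C) =
      (λ_ ((Vᘁ) : D)).inv ≫ (ε F ▷ (Vᘁ)) := by
  apply E_inj V
  calc (((ρ_ ((Vᘁ) : D)).inv ≫ (((Vᘁ) : D) ◁ ε G) ≫ dualSigma F G V σ (𝟙_ C)) ▷ V) ≫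
        (α_ _ _ _).hom ≫ (F.obj (𝟙_ C) ◁ ε_ V (Vᘁ)) ≫ (ρ_ _).hom
      = ((ρ_ ((Vᘁ) : D)).inv ▷ V) ≫ ((((Vᘁ) : D) ◁ ε G) ▷ V) ≫ ((dualSigma F G V σ (𝟙_ C) ▷ V) ≫
          (α_ _ _ _).hom ≫ (F.obj (𝟙_ C) ◁ ε_ V (Vᘁ)) ≫ (ρ_ _).hom) := by simp
    _ = ((ρ_ ((Vᘁ) : D)).inv ▷ V) ≫ ((((Vᘁ) : D) ◁ ε G) ▷ V) ≫ ((α_ _ _ _).hom ≫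
          (((Vᘁ) : D) ◁ inv (σ (𝟙_ C))) ≫ (α_ _ _ _).inv ≫ (ε_ V (Vᘁ) ▷ F.obj (𝟙_ C)) ≫
          (λ_ _).hom) := by rw [dualSigma_eval]
    _ = 𝟙 _ ⊗≫ (((Vᘁ) : D) ◁ ((λ_ V).inv ≫ (ε G ▷ V) ≫ inv (σ (𝟙_ C)))) ⊗≫
          (ε_ V (Vᘁ) ▷ F.obj (𝟙_ C)) ⊗≫ 𝟙 _ := by monoidal
    _ = 𝟙 _ ⊗≫ (((Vᘁ) : D) ◁ ((ρ_ V).inv ≫ (V ◁ ε F))) ⊗≫ (ε_ V (Vᘁ) ▷ F.obj (𝟙_ C)) ⊗≫ 𝟙 _ := by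
          rw [inv_unit F G V h]
    _ = 𝟙 _ ⊗≫ ((((((Vᘁ) : D) ⊗ V : D)) ◁ ε F) ≫ (ε_ V (Vᘁ) ▷ F.obj (𝟙_ C))) ⊗≫ 𝟙 _ := by monoidal
    _ = 𝟙 _ ⊗≫ ((ε_ V (Vᘁ) ▷ 𝟙_ D) ≫ (𝟙_ D ◁ ε F)) ⊗≫ 𝟙 _ := by rw [whisker_exchange]
    _ = 𝟙 _ ⊗≫ ((𝟙_ D ◁ ε_ V (Vᘁ)) ≫ (ε F ▷ 𝟙_ D)) ⊗≫ 𝟙 _ := by monoidal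
    _ = 𝟙 _ ⊗≫ ((ε F ▷ (((Vᘁ) : D) ⊗ V)) ≫ (F.obj (𝟙_ C) ◁ ε_ V (Vᘁ))) ⊗≫ 𝟙 _ := by
          rw [← whisker_exchange]
    _ = (((λ_ ((Vᘁ) : D)).inv ≫ (ε F ▷ (Vᘁ))) ▷ V) ≫ (α_ _ _ _).hom ≫
          (F.obj (𝟙_ C) ◁ ε_ V (Vᘁ)) ≫ (ρ_ _).hom := by monoidal

lemma dual_tensor (X Y : C) :
    (dualSigma F G V σ X ▷ G.obj Y) ≫ (α_ (F.obj X) (Vᘁ) (G.obj Y)).hom ≫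
        (F.obj X ◁ dualSigma F G V σ Y) ≫ (α_ (F.obj X) (F.obj Y) (Vᘁ)).inv ≫
        (μ F X Y ▷ (Vᘁ)) =
      (α_ ((Vᘁ) : D) (G.obj X) (G.obj Y)).hom ≫ (((Vᘁ) : D) ◁ μ G X Y) ≫
        dualSigma F G V σ (X ⊗ Y) := by
  apply E_inj V
  calc (((dualSigma F G V σ X ▷ G.obj Y) ≫ (α_ (F.obj X) (Vᘁ) (G.obj Y)).hom ≫
        (F.obj X ◁ dualSigma F G V σ Y) ≫ (α_ (F.obj X) (F.obj Y) (Vᘁ)).inv ≫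
        (μ F X Y ▷ (Vᘁ))) ▷ V) ≫ (α_ _ _ _).hom ≫ (F.obj (X ⊗ Y) ◁ ε_ V (Vᘁ)) ≫ (ρ_ _).hom
      = 𝟙 _ ⊗≫ ((dualSigma F G V σ X ▷ G.obj Y) ▷ V) ⊗≫ ((F.obj X ◁ dualSigma F G V σ Y) ▷ V)
          ⊗≫ ((μ F X Y ▷ (((Vᘁ) : D) ⊗ V)) ≫ (F.obj (X ⊗ Y) ◁ ε_ V (Vᘁ))) ⊗≫ 𝟙 _ := by monoidal
    _ = 𝟙 _ ⊗≫ ((dualSigma F G V σ X ▷ G.obj Y) ▷ V) ⊗≫ ((F.obj X ◁ dualSigma F G V σ Y) ▷ V)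
          ⊗≫ (((F.obj X ⊗ F.obj Y) ◁ ε_ V (Vᘁ)) ≫ (μ F X Y ▷ 𝟙_ D)) ⊗≫ 𝟙 _ := by
          rw [← whisker_exchange]
    _ = 𝟙 _ ⊗≫ ((dualSigma F G V σ X ▷ G.obj Y) ▷ V) ⊗≫
          (F.obj X ◁ ((dualSigma F G V σ Y ▷ V) ≫ (α_ _ _ _).hom ≫
            (F.obj Y ◁ ε_ V (Vᘁ)) ≫ (ρ_ _).hom)) ⊗≫ μ F X Y := by monoidal
    _ = 𝟙 _ ⊗≫ ((dualSigma F G V σ X ▷ G.obj Y) ▷ V) ⊗≫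
          (F.obj X ◁ ((α_ _ _ _).hom ≫ (((Vᘁ) : D) ◁ inv (σ Y)) ≫ (α_ _ _ _).inv ≫
            (ε_ V (Vᘁ) ▷ F.obj Y) ≫ (λ_ _).hom)) ⊗≫ μ F X Y := by rw [dualSigma_eval]
    _ = 𝟙 _ ⊗≫ ((dualSigma F G V σ X ▷ (G.obj Y ⊗ V)) ≫ ((F.obj X ⊗ (Vᘁ)) ◁ inv (σ Y))) ⊗≫
          (F.obj X ◁ ((α_ _ _ _).inv ≫ (ε_ V (Vᘁ) ▷ F.obj Y) ≫ (λ_ _).hom)) ⊗≫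
          μ F X Y := by monoidal
    _ = 𝟙 _ ⊗≫ ((((((Vᘁ) : D) ⊗ G.obj X : D)) ◁ inv (σ Y)) ≫ (dualSigma F G V σ X ▷ (V ⊗ F.obj Y))) ⊗≫
          (F.obj X ◁ ((α_ _ _ _).inv ≫ (ε_ V (Vᘁ) ▷ F.obj Y) ≫ (λ_ _).hom)) ⊗≫
          μ F X Y := by rw [← whisker_exchange]
    _ = 𝟙 _ ⊗≫ (((Vᘁ) : D) ◁ (G.obj X ◁ inv (σ Y))) ⊗≫
          ((((dualSigma F G V σ X ▷ V) ≫ (α_ _ _ _).hom ≫ (F.obj X ◁ ε_ V (Vᘁ)) ≫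
            (ρ_ _).hom)) ▷ F.obj Y) ⊗≫ μ F X Y := by monoidal
    _ = 𝟙 _ ⊗≫ (((Vᘁ) : D) ◁ (G.obj X ◁ inv (σ Y))) ⊗≫
          (((α_ _ _ _).hom ≫ (((Vᘁ) : D) ◁ inv (σ X)) ≫ (α_ _ _ _).inv ≫ (ε_ V (Vᘁ) ▷ F.obj X) ≫
            (λ_ _).hom) ▷ F.obj Y) ⊗≫ μ F X Y := by rw [dualSigma_eval]
    _ = 𝟙 _ ⊗≫ (((Vᘁ) : D) ◁ (G.obj X ◁ inv (σ Y))) ⊗≫ (((Vᘁ) : D) ◁ (inv (σ X) ▷ F.obj Y)) ⊗≫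
          (ε_ V (Vᘁ) ▷ (F.obj X ⊗ F.obj Y)) ⊗≫ μ F X Y := by monoidal
    _ = 𝟙 _ ⊗≫ (((Vᘁ) : D) ◁ (G.obj X ◁ inv (σ Y))) ⊗≫ (((Vᘁ) : D) ◁ (inv (σ X) ▷ F.obj Y)) ⊗≫
          ((ε_ V (Vᘁ) ▷ (F.obj X ⊗ F.obj Y)) ≫ (𝟙_ D ◁ μ F X Y)) ⊗≫ 𝟙 _ := by monoidal
    _ = 𝟙 _ ⊗≫ (((Vᘁ) : D) ◁ (G.obj X ◁ inv (σ Y))) ⊗≫ (((Vᘁ) : D) ◁ (inv (σ X) ▷ F.obj Y)) ⊗≫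
          ((((((Vᘁ) : D) ⊗ V : D)) ◁ μ F X Y) ≫ (ε_ V (Vᘁ) ▷ F.obj (X ⊗ Y))) ⊗≫ 𝟙 _ := by
          rw [← whisker_exchange]
    _ = 𝟙 _ ⊗≫ (((Vᘁ) : D) ◁ ((α_ (G.obj X) (G.obj Y) V).hom ≫ (G.obj X ◁ inv (σ Y)) ≫
          (α_ (G.obj X) V (F.obj Y)).inv ≫ (inv (σ X) ▷ F.obj Y) ≫
          (α_ V (F.obj X) (F.obj Y)).hom ≫ (V ◁ μ F X Y))) ⊗≫
          (ε_ V (Vᘁ) ▷ F.obj (X ⊗ Y)) ⊗≫ 𝟙 _ := by monoidal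
    _ = 𝟙 _ ⊗≫ (((Vᘁ) : D) ◁ ((μ G X Y ▷ V) ≫ inv (σ (X ⊗ Y)))) ⊗≫
          (ε_ V (Vᘁ) ▷ F.obj (X ⊗ Y)) ⊗≫ 𝟙 _ := by rw [inv_tensor F G V h X Y]
    _ = ((α_ ((Vᘁ) : D) (G.obj X) (G.obj Y)).hom ▷ V) ≫ ((((Vᘁ) : D) ◁ μ G X Y) ▷ V) ≫
          ((α_ _ _ _).hom ≫ (((Vᘁ) : D) ◁ inv (σ (X ⊗ Y))) ≫ (α_ _ _ _).inv ≫
            (ε_ V (Vᘁ) ▷ F.obj (X ⊗ Y)) ≫ (λ_ _).hom) := by monoidal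
    _ = ((α_ ((Vᘁ) : D) (G.obj X) (G.obj Y)).hom ▷ V) ≫ ((((Vᘁ) : D) ◁ μ G X Y) ▷ V) ≫
          ((dualSigma F G V σ (X ⊗ Y) ▷ V) ≫ (α_ _ _ _).hom ≫
            (F.obj (X ⊗ Y) ◁ ε_ V (Vᘁ)) ≫ (ρ_ _).hom) := by rw [dualSigma_eval]
    _ = (((α_ ((Vᘁ) : D) (G.obj X) (G.obj Y)).hom ≫ (((Vᘁ) : D) ◁ μ G X Y) ≫
          dualSigma F G V σ (X ⊗ Y)) ▷ V) ≫ (α_ _ _ _).hom ≫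
          (F.obj (X ⊗ Y) ◁ ε_ V (Vᘁ)) ≫ (ρ_ _).hom := by simp
end A

/-- (a) `(Vᘁ, σ*)` is a `Z(G,F)`-pair; (b) the evaluation of `V` intertwines the
composed half-braidings; (c) the coevaluation of `V` intertwines them as well.
Hence `(Vᘁ, σ*)`, together with the evaluation and coevaluation of `V`, is a left
dual of `(V, σ)`. -/
theorem IsZPair.dual [RigidCategory C] [RigidCategory D]
    (F G : C ⥤ D) [F.Monoidal] [G.Monoidal]
    (V : D) (σ : ∀ X : C, V ⊗ F.obj X ⟶ G.obj X ⊗ V) [∀ X, IsIso (σ X)]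
    (h : IsZPair F G V σ) :
    IsZPair G F (Vᘁ) (dualSigma F G V σ) ∧
    (∀ X : C,
      (α_ (Vᘁ) V (F.obj X)).hom ≫ ((Vᘁ) ◁ σ X) ≫ (α_ (Vᘁ) (G.obj X) V).inv ≫
          (dualSigma F G V σ X ▷ V) ≫ (α_ (F.obj X) (Vᘁ) V).hom ≫
          (F.obj X ◁ ε_ V (Vᘁ)) ≫ (ρ_ (F.obj X)).hom =
        (ε_ V (Vᘁ) ▷ F.obj X) ≫ (λ_ (F.obj X)).hom) ∧
    (∀ X : C,
      (λ_ (G.obj X)).inv ≫ (η_ V (Vᘁ) ▷ G.obj X) ≫ (α_ V (Vᘁ) (G.obj X)).hom ≫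
          (V ◁ dualSigma F G V σ X) ≫ (α_ V (F.obj X) (Vᘁ)).inv ≫
          (σ X ▷ (Vᘁ)) ≫ (α_ (G.obj X) V (Vᘁ)).hom =
        (ρ_ (G.obj X)).inv ≫ (G.obj X ◁ η_ V (Vᘁ))) := by
  exact ⟨⟨fun f => dual_naturality F G V h f, dual_unit F G V h,
      fun X Y => dual_tensor F G V h X Y⟩,
    fun X => part_b F G V σ X, fun X => part_c F G V σ X⟩
end

section
/- Let M and N be right A-modules in C, and suppose the equalizer E of the pair of morphisms δ'_N ⊗ id_{M^*} and id_N ⊗ δ_M : N ⊗ M^* ⟶ N ⊗ A^* ⊗ M^* exists, with equalizer inclusion e : E ⟶ N ⊗ M^* (associators inserted as needed). Then for every object X of C there is a bijection, natural in X, between Hom_C(X, E) and the set of right A-module morphisms X ⊗ M ⟶ N; explicitly, a morphism f : X ⊗ M ⟶ N is a morphism of right A-modules if and only if its adjunct X ⟶ N ⊗ M^* (under the duality adjunction Hom_C(X ⊗ M, N) ≅ Hom_C(X, N ⊗ M^*)) equalizes the above pair, i.e. factors through e. -/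
/-!
Under the duality adjunction `Hom(X ⊗ M, N) ≅ Hom(X, N ⊗ Mᘁ)`, applied twice, the two sides
of the module-morphism condition `X ⊗ M ⊗ A ⟶ N` become `f♭ ≫ (δ'_N ▷ Mᘁ)` and
`f♭ ≫ (N ◁ δ_M)` (up to associators): for the first this is naturality of the adjunction,
for the second it is its dinaturality in the dualised object, `δ_M` being the mate of the
action with respect to the tensor pairing of `M ⊗ A` with `Aᘁ ⊗ Mᘁ`. So `f` is a module
morphism iff `f♭` equalizes the pair, and the universal property of the equalizer turns this
into a bijection `Hom(X, E) ≃ Hom_A(X ⊗ M, N)`, natural in `X`.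
-/

open CategoryTheory MonoidalCategory CategoryTheory.Limits

variable {C : Type*} [Category C] [MonoidalCategory C]

/-- A right module over a monoid object `A` in `C`. -/
structure RightMod (A : Mon C) where
  X : C
  act : X ⊗ A.X ⟶ X
  assoc : (act ▷ A.X) ≫ act = (α_ X A.X A.X).hom ≫ (X ◁ MonObj.mul (X := A.X)) ≫ act
  unit : (X ◁ MonObj.one (X := A.X)) ≫ act = (ρ_ X).hom

/-- `f : X ⊗ M ⟶ N` is a morphism of right `A`-modules, where `X ⊗ M` carries the
right `A`-module structure `(α) ≫ (X ◁ act_M)`. -/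
def IsModuleMorphismFrom {A : Mon C} (X : C) (M N : RightMod A)
    (f : X ⊗ M.X ⟶ N.X) : Prop :=
  (f ▷ A.X) ≫ N.act = (α_ X M.X A.X).hom ≫ (X ◁ M.act) ≫ f

section

variable {A : Mon C} [RigidCategory C]

/-- `δ_M : Mᘁ ⟶ Aᘁ ⊗ Mᘁ`, the transpose of the right action of `A` on `M`,
composed with the canonical isomorphism `(M ⊗ A)ᘁ ≅ Aᘁ ⊗ Mᘁ`, written out as an
explicit composite. -/
noncomputable def deltaDual (M : RightMod A) : (M.X)ᘁ ⟶ A.Xᘁ ⊗ M.Xᘁ :=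
  (ρ_ (M.Xᘁ)).inv ≫
    (M.Xᘁ ◁ (η_ M.X (M.Xᘁ) ≫
      (M.X ◁ ((λ_ (M.Xᘁ)).inv ≫ (η_ A.X (A.Xᘁ) ▷ M.Xᘁ) ≫ (α_ A.X (A.Xᘁ) (M.Xᘁ)).hom)) ≫
      (α_ M.X A.X (A.Xᘁ ⊗ M.Xᘁ)).inv)) ≫
    (M.Xᘁ ◁ (M.act ▷ (A.Xᘁ ⊗ M.Xᘁ))) ≫
    (α_ (M.Xᘁ) M.X (A.Xᘁ ⊗ M.Xᘁ)).inv ≫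
    (ε_ M.X (M.Xᘁ) ▷ (A.Xᘁ ⊗ M.Xᘁ)) ≫ (λ_ (A.Xᘁ ⊗ M.Xᘁ)).hom

/-- `δ'_N = (act_N ⊗ id_{Aᘁ}) ∘ (id_N ⊗ coev_A) : N ⟶ N ⊗ Aᘁ`. -/
noncomputable def deltaAct (N : RightMod A) : N.X ⟶ N.X ⊗ A.Xᘁ :=
  (ρ_ N.X).inv ≫ (N.X ◁ η_ A.X (A.Xᘁ)) ≫ (α_ N.X A.X (A.Xᘁ)).inv ≫ (N.act ▷ A.Xᘁ)

end

namespace CategoryTheory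

section ExactPairing

/-- `rightAdjointMate` for arbitrary exact pairings: `δ_M` is the mate of the action for the
pairing of `M ⊗ A` with `Aᘁ ⊗ Mᘁ`, not with the chosen dual `(M ⊗ A)ᘁ`. -/
def exactPairingMate {Y₁ Y₁' Y₂ Y₂' : C} [ExactPairing Y₁ Y₁'] [ExactPairing Y₂ Y₂']
    (h : Y₁ ⟶ Y₂) : Y₂' ⟶ Y₁' :=
  (ρ_ _).inv ≫ _ ◁ η_ Y₁ Y₁' ≫ _ ◁ h ▷ _ ≫ (α_ _ _ _).inv ≫ ε_ Y₂ Y₂' ▷ _ ≫ (λ_ _).hom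

theorem coevaluation_comp_whiskerLeft_exactPairingMate {Y₁ Y₁' Y₂ Y₂' : C}
    [ExactPairing Y₁ Y₁'] [ExactPairing Y₂ Y₂'] (h : Y₁ ⟶ Y₂) :
    η_ Y₂ Y₂' ≫ Y₂ ◁ exactPairingMate h = η_ Y₁ Y₁' ≫ h ▷ Y₁' :=
  calc
    _ = 𝟙 _ ⊗≫ (η_ Y₂ Y₂' ▷ 𝟙_ C ≫ (Y₂ ⊗ Y₂') ◁ η_ Y₁ Y₁') ⊗≫ Y₂ ◁ (Y₂' ◁ (h ▷ Y₁')) ⊗≫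
          Y₂ ◁ (ε_ Y₂ Y₂' ▷ Y₁') ⊗≫ 𝟙 _ := by
      dsimp only [exactPairingMate]; monoidal
    _ = 𝟙 _ ⊗≫ η_ Y₁ Y₁' ⊗≫ (η_ Y₂ Y₂' ▷ (Y₁ ⊗ Y₁') ≫ (Y₂ ⊗ Y₂') ◁ (h ▷ Y₁')) ⊗≫
          Y₂ ◁ (ε_ Y₂ Y₂' ▷ Y₁') ⊗≫ 𝟙 _ := by
      rw [← whisker_exchange]; monoidal
    _ = 𝟙 _ ⊗≫ η_ Y₁ Y₁' ⊗≫ h ▷ Y₁' ⊗≫ (η_ Y₂ Y₂' ▷ Y₂ ⊗≫ Y₂ ◁ ε_ Y₂ Y₂') ▷ Y₁' ⊗≫ 𝟙 _ := by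
      rw [← whisker_exchange]; monoidal
    _ = _ := by
      rw [ExactPairing.evaluation_coevaluation'']; monoidal

theorem tensorRightHomEquiv_whiskerRight_comp {X X' Y Y' Z : C} [ExactPairing Y Y']
    (t : X' ⟶ X) (f : X ⊗ Y ⟶ Z) :
    tensorRightHomEquiv X' Y Y' Z (t ▷ Y ≫ f) = t ≫ tensorRightHomEquiv X Y Y' Z f := by
  apply (tensorRightHomEquiv X' Y Y' Z).symm.injective
  rw [Equiv.symm_apply_apply, tensorRightHomEquiv_symm_naturality, Equiv.symm_apply_apply]

theorem tensorRightHomEquiv_whiskerLeft_comp {X Y₁ Y₁' Y₂ Y₂' Z : C}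
    [ExactPairing Y₁ Y₁'] [ExactPairing Y₂ Y₂'] (h : Y₁ ⟶ Y₂) (f : X ⊗ Y₂ ⟶ Z) :
    tensorRightHomEquiv X Y₁ Y₁' Z (X ◁ h ≫ f) =
      tensorRightHomEquiv X Y₂ Y₂' Z f ≫ Z ◁ exactPairingMate h :=
  calc
    _ = (ρ_ X).inv ≫ X ◁ (η_ Y₁ Y₁' ≫ h ▷ Y₁') ≫ (α_ X Y₂ Y₁').inv ≫ f ▷ Y₁' := by
      simp [tensorRightHomEquiv]
    _ = (ρ_ X).inv ≫ X ◁ η_ Y₂ Y₂' ≫ (α_ X Y₂ Y₂').inv ≫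
          (f ▷ Y₂' ≫ Z ◁ exactPairingMate (Y₁' := Y₁') h) := by
      rw [← coevaluation_comp_whiskerLeft_exactPairingMate (Y₂' := Y₂') h, ← whisker_exchange]
      simp
    _ = _ := by simp [tensorRightHomEquiv]

theorem tensorRightHomEquiv_tensorRightHomEquiv {X Y₁ Y₁' Y₂ Y₂' Z : C}
    [ExactPairing Y₁ Y₁'] [ExactPairing Y₂ Y₂'] (g : (X ⊗ Y₁) ⊗ Y₂ ⟶ Z) :
    tensorRightHomEquiv X Y₁ Y₁' (Z ⊗ Y₂') (tensorRightHomEquiv (X ⊗ Y₁) Y₂ Y₂' Z g) =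
      tensorRightHomEquiv X (Y₁ ⊗ Y₂) (Y₂' ⊗ Y₁') Z ((α_ X Y₁ Y₂).inv ≫ g) ≫
        (α_ Z Y₂' Y₁').inv := by
  simp only [tensorRightHomEquiv, Equiv.coe_fn_mk, ExactPairing.tensor_coevaluation]
  monoidal

end ExactPairing

end CategoryTheory

section RightMod

variable {A : Mon C} [RigidCategory C]

theorem deltaAct_eq_tensorRightHomEquiv (N : RightMod A) :
    deltaAct N = tensorRightHomEquiv N.X A.X (A.Xᘁ) N.X N.act :=
  rfl

theorem deltaDual_eq_exactPairingMate (M : RightMod A) :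
    deltaDual M = exactPairingMate (Y₁' := A.Xᘁ ⊗ M.Xᘁ) (Y₂' := M.Xᘁ) M.act := by
  simp only [deltaDual, exactPairingMate, ExactPairing.tensor_coevaluation]
  monoidal

theorem tensorRightHomEquiv_tensorRightHomEquiv_whiskerRight_comp_act (M N : RightMod A)
    {X : C} (f : X ⊗ M.X ⟶ N.X) :
    tensorRightHomEquiv X M.X (M.Xᘁ) (N.X ⊗ A.Xᘁ)
        (tensorRightHomEquiv (X ⊗ M.X) A.X (A.Xᘁ) N.X (f ▷ A.X ≫ N.act)) =
      tensorRightHomEquiv X M.X (M.Xᘁ) N.X f ≫ deltaAct N ▷ M.Xᘁ := by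
  rw [tensorRightHomEquiv_whiskerRight_comp, ← deltaAct_eq_tensorRightHomEquiv,
    tensorRightHomEquiv_naturality]

theorem tensorRightHomEquiv_tensorRightHomEquiv_whiskerLeft_act_comp (M : RightMod A)
    {X Z : C} (f : X ⊗ M.X ⟶ Z) :
    tensorRightHomEquiv X M.X (M.Xᘁ) (Z ⊗ A.Xᘁ)
        (tensorRightHomEquiv (X ⊗ M.X) A.X (A.Xᘁ) Z ((α_ X M.X A.X).hom ≫ X ◁ M.act ≫ f)) =
      tensorRightHomEquiv X M.X (M.Xᘁ) Z f ≫ Z ◁ deltaDual M ≫ (α_ Z (A.Xᘁ) (M.Xᘁ)).inv := by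
  rw [tensorRightHomEquiv_tensorRightHomEquiv, Iso.inv_hom_id_assoc,
    tensorRightHomEquiv_whiskerLeft_comp (Y₂' := M.Xᘁ), deltaDual_eq_exactPairingMate,
    Category.assoc]

theorem isModuleMorphismFrom_iff (M N : RightMod A) {X : C} (f : X ⊗ M.X ⟶ N.X) :
    IsModuleMorphismFrom X M N f ↔
      tensorRightHomEquiv X M.X (M.Xᘁ) N.X f ≫
          ((deltaAct N ▷ M.Xᘁ) ≫ (α_ N.X (A.Xᘁ) (M.Xᘁ)).hom) =
        tensorRightHomEquiv X M.X (M.Xᘁ) N.X f ≫ (N.X ◁ deltaDual M) := by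
  let adjunct := (tensorRightHomEquiv (X ⊗ M.X) A.X (A.Xᘁ) N.X).trans
    (tensorRightHomEquiv X M.X (M.Xᘁ) (N.X ⊗ A.Xᘁ))
  rw [IsModuleMorphismFrom, ← adjunct.injective.eq_iff]
  simp only [adjunct, Equiv.trans_apply,
    tensorRightHomEquiv_tensorRightHomEquiv_whiskerRight_comp_act,
    tensorRightHomEquiv_tensorRightHomEquiv_whiskerLeft_act_comp]
  rw [← Category.assoc, Iso.eq_comp_inv, Category.assoc]

section Equalizer

variable {M N : RightMod A} {E : C} {e : E ⟶ N.X ⊗ M.Xᘁ}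
  {w : e ≫ ((deltaAct N ▷ M.Xᘁ) ≫ (α_ N.X (A.Xᘁ) (M.Xᘁ)).hom) = e ≫ (N.X ◁ deltaDual M)}

noncomputable def homEquivModuleHomOfIsLimit (hE : IsLimit (Fork.ofι e w)) (X : C) :
    (X ⟶ E) ≃ { f : X ⊗ M.X ⟶ N.X // IsModuleMorphismFrom X M N f } :=
  (Fork.IsLimit.homIso hE X).trans <| (tensorRightHomEquiv X M.X (M.Xᘁ) N.X).symm.subtypeEquiv
    fun g => by rw [isModuleMorphismFrom_iff, Equiv.apply_symm_apply]

theorem homEquivModuleHomOfIsLimit_apply_coe (hE : IsLimit (Fork.ofι e w)) {X : C}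
    (g : X ⟶ E) :
    (homEquivModuleHomOfIsLimit hE X g).1 = (tensorRightHomEquiv X M.X (M.Xᘁ) N.X).symm (g ≫ e) :=
  rfl

end Equalizer

/-- Internal-Hom property of the equalizer of `δ'_N ⊗ id` and `id ⊗ δ_M`:
a morphism `f : X ⊗ M ⟶ N` is a module morphism iff its adjunct `X ⟶ N ⊗ Mᘁ`
equalizes the pair, and consequently `Hom(X, E)` is in bijection, naturally in `X`,
with the right `A`-module morphisms `X ⊗ M ⟶ N` (the bijection being implemented
by factoring the adjunct through `e`). -/
theorem module_hom_equalizer_bijection (M N : RightMod A)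
    (E : C) (e : E ⟶ N.X ⊗ M.Xᘁ)
    (w : e ≫ ((deltaAct N ▷ M.Xᘁ) ≫ (α_ N.X (A.Xᘁ) (M.Xᘁ)).hom) =
      e ≫ (N.X ◁ deltaDual M))
    (hE : IsLimit (Fork.ofι e w)) :
    (∀ (X : C) (f : X ⊗ M.X ⟶ N.X),
      IsModuleMorphismFrom X M N f ↔
        tensorRightHomEquiv X M.X (M.Xᘁ) N.X f ≫
            ((deltaAct N ▷ M.Xᘁ) ≫ (α_ N.X (A.Xᘁ) (M.Xᘁ)).hom) =
          tensorRightHomEquiv X M.X (M.Xᘁ) N.X f ≫ (N.X ◁ deltaDual M)) ∧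
    ∃ Φ : ∀ X : C, (X ⟶ E) ≃ { f : X ⊗ M.X ⟶ N.X // IsModuleMorphismFrom X M N f },
      (∀ (X : C) (g : X ⟶ E),
        tensorRightHomEquiv X M.X (M.Xᘁ) N.X ((Φ X g).1) = g ≫ e) ∧
      (∀ (X X' : C) (t : X' ⟶ X) (g : X ⟶ E),
        ((Φ X' (t ≫ g)).1 : X' ⊗ M.X ⟶ N.X) = (t ▷ M.X) ≫ (Φ X g).1) := by
  refine ⟨fun X => isModuleMorphismFrom_iff M N, homEquivModuleHomOfIsLimit hE, ?_, ?_⟩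
  · intro X g
    rw [homEquivModuleHomOfIsLimit_apply_coe, Equiv.apply_symm_apply]
  · intro X X' t g
    rw [homEquivModuleHomOfIsLimit_apply_coe, homEquivModuleHomOfIsLimit_apply_coe,
      Category.assoc, tensorRightHomEquiv_symm_naturality]

end RightMod
end

section
/- Let M and N be right A-modules in C, and suppose the equalizer E of the pair δ'_N ⊗ id_{M^*} and id_N ⊗ δ_M : N ⊗ M^* ⟶ N ⊗ A^* ⊗ M^* exists, with equalizer inclusion e : E ⟶ N ⊗ M^*. Define the left A-action ▷_N : A ⊗ ᘁN ⟶ ᘁN as the composite (id_{ᘁN} ⊗ eval'_N) ∘ (id_{ᘁN} ⊗ ◁_N ⊗ id_{ᘁN}) ∘ (coev'_N ⊗ id_A ⊗ id_{ᘁN}), with associators inserted as needed. Then the right dual ᘁE, together with the composite M ⊗ ᘁN ≅ ᘁ(M^*) ⊗ ᘁN ≅ ᘁ(N ⊗ M^*) → ᘁE obtained from the canonical isomorphisms and the right-dual morphism ᘁe, is a coequalizer of the pair of morphisms id_M ⊗ ▷_N and ◁_M ⊗ id_{ᘁN} : M ⊗ A ⊗ ᘁN ⟶ M ⊗ ᘁN.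 -/
/-!
Let `C` be a rigid monoidal category, `A` a monoid object in `C`, and `M`, `N`
right `A`-modules.  Suppose the equalizer `E` of `δ'_N ⊗ id` and
`id ⊗ δ_M : N ⊗ Mᘁ ⟶ N ⊗ (Aᘁ ⊗ Mᘁ)` exists, with inclusion `e : E ⟶ N ⊗ Mᘁ`.
Endow `ᘁN` with the left `A`-action
`▷_N = (id ⊗ eval'_N) ∘ (id ⊗ act_N ⊗ id) ∘ (coev'_N ⊗ id ⊗ id)`.
Then `ᘁE`, together with the canonical composite `M ⊗ ᘁN ⟶ ᘁE` obtained from the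
canonical isomorphisms `M ⊗ ᘁN ≅ ᘁ(Mᘁ) ⊗ ᘁN ≅ ᘁ(N ⊗ Mᘁ)` and the right-dual
morphism `ᘁe`, is a coequalizer of `id_M ⊗ ▷_N` and `act_M ⊗ id_{ᘁN}`.

(Mathlib's right dual `Xᘁ` plays the role of the paper's left dual `X^*`, and
Mathlib's left dual `ᘁX`, with `ε_ (ᘁX) X : X ⊗ ᘁX ⟶ 𝟙` and
`η_ (ᘁX) X : 𝟙 ⟶ ᘁX ⊗ X`, is the paper's right dual.)
-/

open CategoryTheory MonoidalCategory CategoryTheory.Limits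

variable {C : Type*} [Category C] [MonoidalCategory C]

section

variable {A : Mon C} [RigidCategory C]

/-- The left `A`-action on `ᘁN`:
`▷_N = (id ⊗ eval'_N) ∘ (id ⊗ act_N ⊗ id) ∘ (coev'_N ⊗ id ⊗ id) : A ⊗ ᘁN ⟶ ᘁN`. -/
noncomputable def leftActOnLeftDual (N : RightMod A) : A.X ⊗ (ᘁN.X : C) ⟶ (ᘁN.X : C) :=
  (λ_ (A.X ⊗ (ᘁN.X : C))).inv ≫ (η_ (ᘁN.X) N.X ▷ (A.X ⊗ (ᘁN.X : C))) ≫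
    (α_ (ᘁN.X : C) N.X (A.X ⊗ (ᘁN.X : C))).hom ≫
    ((ᘁN.X : C) ◁ (α_ N.X A.X (ᘁN.X : C)).inv) ≫
    ((ᘁN.X : C) ◁ (N.act ▷ (ᘁN.X : C))) ≫
    ((ᘁN.X : C) ◁ ε_ (ᘁN.X) N.X) ≫ (ρ_ (ᘁN.X : C)).hom

/-- The canonical evaluation `(N ⊗ Mᘁ) ⊗ (M ⊗ ᘁN) ⟶ 𝟙`, exhibiting `M ⊗ ᘁN` as a
left dual of `N ⊗ Mᘁ` via the canonical isomorphisms `M ≅ ᘁ(Mᘁ)` and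
`ᘁ(Mᘁ) ⊗ ᘁN ≅ ᘁ(N ⊗ Mᘁ)`. -/
noncomputable def pairEval (M N : RightMod A) :
    (N.X ⊗ M.Xᘁ) ⊗ (M.X ⊗ (ᘁN.X : C)) ⟶ 𝟙_ C :=
  (α_ N.X (M.Xᘁ) (M.X ⊗ (ᘁN.X : C))).hom ≫
    (N.X ◁ ((α_ (M.Xᘁ) M.X (ᘁN.X : C)).inv ≫ (ε_ M.X (M.Xᘁ) ▷ (ᘁN.X : C)) ≫
      (λ_ (ᘁN.X : C)).hom)) ≫ ε_ (ᘁN.X) N.X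

/-- The canonical composite `M ⊗ ᘁN ≅ ᘁ(Mᘁ) ⊗ ᘁN ≅ ᘁ(N ⊗ Mᘁ) ⟶ ᘁE` obtained from
the canonical isomorphisms and the right-dual (mate) of `e : E ⟶ N ⊗ Mᘁ`. -/
noncomputable def coforkMap (M N : RightMod A) {E : C} (e : E ⟶ N.X ⊗ M.Xᘁ) :
    M.X ⊗ (ᘁN.X : C) ⟶ (ᘁE : C) :=
  (λ_ (M.X ⊗ (ᘁN.X : C))).inv ≫ (η_ (ᘁE) E ▷ (M.X ⊗ (ᘁN.X : C))) ≫
    (α_ (ᘁE : C) E (M.X ⊗ (ᘁN.X : C))).hom ≫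
    ((ᘁE : C) ◁ ((e ▷ (M.X ⊗ (ᘁN.X : C))) ≫ pairEval M N)) ≫ (ρ_ (ᘁE : C)).hom

/-!
Exact pairings `(Y', Y)`, `(Z', Z)` turn a parallel pair `f, g : Y ⟶ Z` into its pair of mates
`f', g' : Z' ⟶ Y'`. A cofork `s : Y' ⟶ T` of the mates transposes along the coevaluation to
a morphism `𝟙 ⟶ T ⊗ Y` equalizing `T ◁ f` and `T ◁ g`; since `T ⊗ -` is a right adjoint it
preserves the equalizer `e : E ⟶ Y`, and transposing back along a pairing `(E', E)` shows that
the mate `Y' ⟶ E'` of `e` is a coequalizer of `f'` and `g'`.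

Here `▷_N` is the mate of `δ'_N` and `act_M` the mate of `δ_M`; whiskering and
composing mates identifies `id_M ⊗ ▷_N` and `act_M ⊗ id` with the mates of `δ'_N ⊗ id` and
`id ⊗ δ_M` for the tensor pairings on `M ⊗ ᘁN` and `(M ⊗ A) ⊗ ᘁN`, and `coforkMap` is the mate
of `e`.
-/

open ExactPairing

namespace CategoryTheory

variable {D : Type*} [Category D] [MonoidalCategory D]

def coevaluationHomEquiv (P' P T : D) [ExactPairing P' P] : (P' ⟶ T) ≃ (𝟙_ D ⟶ T ⊗ P) :=
  ((λ_ P').symm.homCongr (Iso.refl T)).trans (tensorRightHomEquiv (𝟙_ D) P' P T)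

theorem coevaluationHomEquiv_apply {P' P T : D} [ExactPairing P' P] (t : P' ⟶ T) :
    coevaluationHomEquiv P' P T t = η_ P' P ≫ t ▷ P := by
  rw [coevaluationHomEquiv, Equiv.trans_apply, ← Equiv.eq_symm_apply,
    tensorRightHomEquiv_symm_coevaluation_comp_whiskerRight]
  simp [Iso.homCongr_apply]

variable {P P' Q Q' : D} [ExactPairing P' P] [ExactPairing Q' Q]

def IsMate (u : P ⟶ Q) (u' : Q' ⟶ P') : Prop :=
  P ◁ u' ≫ ε_ P' P = u ▷ Q' ≫ ε_ Q' Q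

namespace IsMate

theorem coevaluation_comp_whiskerRight {u : P ⟶ Q} {u' : Q' ⟶ P'} (h : IsMate u u') :
    η_ Q' Q ≫ u' ▷ Q = η_ P' P ≫ P' ◁ u := by
  apply (tensorRightHomEquiv (𝟙_ D) Q' Q P').symm.injective
  rw [tensorRightHomEquiv_symm_coevaluation_comp_whiskerRight]
  dsimp only [tensorRightHomEquiv, Equiv.coe_fn_symm_mk]
  unfold IsMate at h
  symm
  calc
    _ = 𝟙 _ ⊗≫ η_ P' P ▷ Q' ⊗≫ P' ◁ (u ▷ Q' ≫ ε_ Q' Q) ⊗≫ 𝟙 P' := by monoidal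
    _ = 𝟙 _ ⊗≫ (𝟙_ D ◁ u' ≫ η_ P' P ▷ P') ⊗≫ P' ◁ ε_ P' P ⊗≫ 𝟙 P' := by
      rw [← h, whisker_exchange]; monoidal
    _ = 𝟙 _ ⊗≫ u' ⊗≫ (η_ P' P ▷ P' ⊗≫ P' ◁ ε_ P' P) ⊗≫ 𝟙 P' := by monoidal
    _ = _ := by rw [evaluation_coevaluation'']; monoidal

theorem comp {R R' : D} [ExactPairing R' R] {u : P ⟶ Q} {u' : Q' ⟶ P'} {v : Q ⟶ R}
    {v' : R' ⟶ Q'} (hu : IsMate u u') (hv : IsMate v v') : IsMate (u ≫ v) (v' ≫ u') := by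
  unfold IsMate at *
  rw [whiskerLeft_comp, Category.assoc, hu, whisker_exchange_assoc, hv, comp_whiskerRight,
    Category.assoc]

theorem whiskerLeft {X Y : D} [ExactPairing X Y] {u : P ⟶ Q} {u' : Q' ⟶ P'} (h : IsMate u u') :
    IsMate (u ▷ Y) (X ◁ u') := by
  unfold IsMate at *
  simp only [tensor_evaluation]
  calc
    _ = 𝟙 _ ⊗≫ P ◁ ((Y ⊗ X) ◁ u' ≫ ε_ X Y ▷ P') ⊗≫ ε_ P' P := by monoidal
    _ = 𝟙 _ ⊗≫ P ◁ (ε_ X Y ▷ Q') ⊗≫ (P ◁ u' ≫ ε_ P' P) := by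
      rw [whisker_exchange]; monoidal
    _ = 𝟙 _ ⊗≫ (P ◁ (ε_ X Y ▷ Q') ≫ u ▷ (𝟙_ D ⊗ Q')) ⊗≫ ε_ Q' Q := by
      rw [h]; monoidal
    _ = 𝟙 _ ⊗≫ (u ▷ ((Y ⊗ X) ⊗ Q') ≫ Q ◁ (ε_ X Y ▷ Q')) ⊗≫ ε_ Q' Q := by
      rw [whisker_exchange]
    _ = _ := by monoidal

theorem whiskerRight {X Y : D} [ExactPairing X Y] {u : P ⟶ Q} {u' : Q' ⟶ P'} (h : IsMate u u') :
    IsMate (Y ◁ u) (u' ▷ X) := by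
  unfold IsMate at *
  simp only [tensor_evaluation]
  calc
    _ = 𝟙 _ ⊗≫ Y ◁ ((P ◁ u' ≫ ε_ P' P) ▷ X) ⊗≫ ε_ X Y := by monoidal
    _ = _ := by rw [h]; monoidal

theorem associator {X₁ X₂ X₃ Y₁ Y₂ Y₃ : D} [ExactPairing X₁ Y₁] [ExactPairing X₂ Y₂]
    [ExactPairing X₃ Y₃] : IsMate (α_ Y₃ Y₂ Y₁).hom (α_ X₁ X₂ X₃).hom := by
  unfold IsMate
  simp only [tensor_evaluation]
  monoidal

end IsMate

theorem isMate_tensorLeftHomEquiv_comp_rightUnitor (u : P ⟶ Q) :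
    IsMate u (tensorLeftHomEquiv Q' P' P (𝟙_ D) (u ▷ Q' ≫ ε_ Q' Q) ≫ (ρ_ P').hom) := by
  unfold IsMate
  conv_rhs => rw [← (tensorLeftHomEquiv Q' P' P (𝟙_ D)).symm_apply_apply (u ▷ Q' ≫ ε_ Q' Q)]
  dsimp only [tensorLeftHomEquiv, Equiv.coe_fn_mk, Equiv.coe_fn_symm_mk]
  monoidal

theorem isMate_tensorRightHomEquiv_comp_leftUnitor (u' : Q' ⟶ P') :
    IsMate (tensorRightHomEquiv P Q' Q (𝟙_ D) (P ◁ u' ≫ ε_ P' P) ≫ (λ_ Q).hom) u' := by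
  unfold IsMate
  conv_lhs => rw [← (tensorRightHomEquiv P Q' Q (𝟙_ D)).symm_apply_apply (P ◁ u' ≫ ε_ P' P)]
  dsimp only [tensorRightHomEquiv, Equiv.coe_fn_mk, Equiv.coe_fn_symm_mk]
  monoidal

theorem IsMate.coevaluationHomEquiv_comp {u : P ⟶ Q} {u' : Q' ⟶ P'} (h : IsMate u u')
    {T : D} (t : P' ⟶ T) :
    coevaluationHomEquiv Q' Q T (u' ≫ t) = coevaluationHomEquiv P' P T t ≫ T ◁ u := by
  rw [coevaluationHomEquiv_apply, coevaluationHomEquiv_apply, comp_whiskerRight,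
    ← Category.assoc, h.coevaluation_comp_whiskerRight, Category.assoc, Category.assoc,
    whisker_exchange]

variable {Y Y' Z Z' E E' : D} [ExactPairing Y' Y] [ExactPairing Z' Z] [ExactPairing E' E]
  {f g : Y ⟶ Z} {f' g' : Z' ⟶ Y'} {e : E ⟶ Y} {π : Y' ⟶ E'}

theorem IsMate.cofork_condition (hf : IsMate f f') (hg : IsMate g g') (he : IsMate e π)
    (w : e ≫ f = e ≫ g) : f' ≫ π = g' ≫ π := by
  apply (coevaluationHomEquiv Z' Z E').injective
  rw [hf.coevaluationHomEquiv_comp, hg.coevaluationHomEquiv_comp, ← Category.comp_id π,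
    he.coevaluationHomEquiv_comp, Category.assoc, Category.assoc, ← whiskerLeft_comp,
    ← whiskerLeft_comp, w]

noncomputable def IsMate.isColimitCofork [RightRigidCategory D] (hf : IsMate f f')
    (hg : IsMate g g') (he : IsMate e π) {w : e ≫ f = e ≫ g} (hE : IsLimit (Fork.ofι e w)) :
    IsColimit (Cofork.ofπ π (hf.cofork_condition hg he w)) :=
  Cofork.IsColimit.mk' _ fun s => by
    haveI := (tensorLeftAdjunction s.pt s.ptᘁ).rightAdjoint_preservesLimits
    have hT := isLimitForkMapOfIsLimit (tensorLeft s.pt) w hE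
    have hs : coevaluationHomEquiv Y' Y s.pt s.π ≫ s.pt ◁ f =
        coevaluationHomEquiv Y' Y s.pt s.π ≫ s.pt ◁ g := by
      rw [← hf.coevaluationHomEquiv_comp, ← hg.coevaluationHomEquiv_comp, s.condition]
    obtain ⟨b, hb⟩ := Fork.IsLimit.lift' hT _ hs
    refine ⟨(coevaluationHomEquiv E' E s.pt).symm b, ?_, fun {m} hm => ?_⟩
    · apply (coevaluationHomEquiv Y' Y s.pt).injective
      exact (he.coevaluationHomEquiv_comp _).trans (by rw [Equiv.apply_symm_apply]; exact hb)
    · rw [Equiv.eq_symm_apply]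
      apply Fork.IsLimit.hom_ext hT
      exact (he.coevaluationHomEquiv_comp m).symm.trans ((congrArg _ hm).trans hb.symm)

end CategoryTheory

theorem deltaAct_whiskerRight_comp_evaluation (N : RightMod A) :
    deltaAct N ▷ (A.X ⊗ (ᘁN.X)) ≫ ε_ (A.X ⊗ (ᘁN.X)) (N.X ⊗ A.Xᘁ) =
      (α_ N.X A.X (ᘁN.X)).inv ≫ N.act ▷ (ᘁN.X) ≫ ε_ (ᘁN.X) N.X := by
  have h : deltaAct N = tensorRightHomEquiv N.X A.X A.Xᘁ N.X N.act := rfl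
  calc
    _ = (α_ N.X A.X (ᘁN.X)).inv ≫
          (tensorRightHomEquiv N.X A.X A.Xᘁ N.X).symm (deltaAct N) ▷ (ᘁN.X) ≫ ε_ (ᘁN.X) N.X := by
      simp only [tensor_evaluation, tensorRightHomEquiv, Equiv.coe_fn_symm_mk]
      monoidal
    _ = _ := by rw [h, Equiv.symm_apply_apply]

theorem isMate_deltaAct_leftActOnLeftDual (N : RightMod A) :
    IsMate (deltaAct N) (leftActOnLeftDual N) := by
  convert isMate_tensorLeftHomEquiv_comp_rightUnitor (deltaAct N) using 1
  rw [deltaAct_whiskerRight_comp_evaluation]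
  simp only [leftActOnLeftDual, tensorLeftHomEquiv, Equiv.coe_fn_mk]
  monoidal

theorem isMate_deltaDual_act (M : RightMod A) : IsMate (deltaDual M) M.act := by
  convert isMate_tensorRightHomEquiv_comp_leftUnitor M.act using 1
  simp only [deltaDual, tensorRightHomEquiv, Equiv.coe_fn_mk, tensor_coevaluation]
  monoidal

theorem pairEval_eq_evaluation (M N : RightMod A) :
    pairEval M N = ε_ (M.X ⊗ (ᘁN.X)) (N.X ⊗ M.Xᘁ) := by
  rw [pairEval, tensor_evaluation]
  monoidal

theorem isMate_coforkMap (M N : RightMod A) {E : C} (e : E ⟶ N.X ⊗ M.Xᘁ) :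
    IsMate e (coforkMap M N e) := by
  have h : coforkMap M N e = tensorLeftHomEquiv (M.X ⊗ (ᘁN.X)) (ᘁE) E (𝟙_ C)
      (e ▷ (M.X ⊗ (ᘁN.X)) ≫ ε_ (M.X ⊗ (ᘁN.X)) (N.X ⊗ M.Xᘁ)) ≫ (ρ_ (ᘁE)).hom := by
    rw [← pairEval_eq_evaluation]
    simp only [coforkMap, tensorLeftHomEquiv, Equiv.coe_fn_mk, Category.assoc]
  rw [h]
  exact isMate_tensorLeftHomEquiv_comp_rightUnitor e

/-- `ᘁE`, with the canonical map `M ⊗ ᘁN ⟶ ᘁE`, is a coequalizer of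
`id_M ⊗ ▷_N` and `act_M ⊗ id_{ᘁN} : (M ⊗ A) ⊗ ᘁN ⟶ M ⊗ ᘁN`. -/
theorem leftDual_equalizer_isCoequalizer (M N : RightMod A)
    (E : C) (e : E ⟶ N.X ⊗ M.Xᘁ)
    (w : e ≫ ((deltaAct N ▷ M.Xᘁ) ≫ (α_ N.X (A.Xᘁ) (M.Xᘁ)).hom) =
      e ≫ (N.X ◁ deltaDual M))
    (hE : IsLimit (Fork.ofι e w)) :
    ∃ (h : ((α_ M.X A.X (ᘁN.X : C)).hom ≫ (M.X ◁ leftActOnLeftDual N)) ≫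
            coforkMap M N e =
          (M.act ▷ (ᘁN.X : C)) ≫ coforkMap M N e),
      Nonempty (IsColimit (Cofork.ofπ (coforkMap M N e) h)) := by
  have hf : IsMate (deltaAct N ▷ M.Xᘁ ≫ (α_ N.X A.Xᘁ M.Xᘁ).hom)
      ((α_ M.X A.X (ᘁN.X)).hom ≫ M.X ◁ leftActOnLeftDual N) :=
    (isMate_deltaAct_leftActOnLeftDual N).whiskerLeft.comp IsMate.associator
  have hg : IsMate (N.X ◁ deltaDual M) (M.act ▷ (ᘁN.X)) := (isMate_deltaDual_act M).whiskerRight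
  exact ⟨_, ⟨hf.isColimitCofork hg (isMate_coforkMap M N e) hE⟩⟩
end
end

section
/- Let B be a braided rigid monoidal category with braiding σ and Drinfeld isomorphism u. For an object X, define v_X : X ⟶ ᘁᘁX as the composite (id_{ᘁᘁX} ⊗ eval'_X) ∘ (id_{ᘁᘁX} ⊗ σ_{X,ᘁX}^{-1}) ∘ (coev'_{ᘁX} ⊗ id_X), with associators and unitors inserted as needed. Then v_X is inverse to the composite of the Drinfeld isomorphism u_{ᘁᘁX} : ᘁᘁX ⟶ (ᘁᘁX)^{**} with the canonical isomorphism (ᘁᘁX)^{**} ≅ X; that is, the composites v_X ∘ (can ∘ u_{ᘁᘁX}) and (can ∘ u_{ᘁᘁX}) ∘ v_X are the identities of ᘁᘁX and X respectively, where can denotes the canonical isomorphism (ᘁᘁX)^{**} ≅ X coming from the fact that the right-dual and left-dual assignments are mutually inverse. -/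
/-!
Let `B` be a braided rigid monoidal category.  For an object `X`, define
`v_X : X ⟶ ᘁᘁX` by `(id ⊗ eval'_X) ∘ (id ⊗ σ_{X,ᘁX}⁻¹) ∘ (coev'_{ᘁX} ⊗ id)`.
Then `v_X` is inverse to the Drinfeld isomorphism `u_{ᘁᘁX}` composed with the
canonical identification `(ᘁᘁX)^{**} ≅ X`; here this composite is expressed
invariantly as the Drinfeld morphism built from the canonical exact pairings
`(ᘁᘁX, ᘁX)` and `(ᘁX, X)`, which exhibit `ᘁX` and `X` as the dual and double
dual of `ᘁᘁX`.

(Mathlib's left dual `ᘁX`, with `ε_ (ᘁX) X : X ⊗ ᘁX ⟶ 𝟙` and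
`η_ (ᘁX) X : 𝟙 ⟶ ᘁX ⊗ X`, is the paper's right dual, and Mathlib's right dual
`Xᘁ` is the paper's left dual `X^*`.)
-/

open CategoryTheory MonoidalCategory

variable {B : Type*} [Category B] [MonoidalCategory B] [BraidedCategory B]

/-- The Drinfeld morphism `X ⟶ X''` associated to exact pairings `(X, X')` and
`(X', X'')` (so that `X'` is a dual of `X` and `X''` a dual of `X'`):
`(eval_X ⊗ id) ∘ (σ_{X,X'} ⊗ id) ∘ (id ⊗ coev_{X'})`. -/
noncomputable def drinfeldMor (X X' X'' : B) [ExactPairing X X'] [ExactPairing X' X''] :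
    X ⟶ X'' :=
  (ρ_ X).inv ≫ (X ◁ η_ X' X'') ≫ (α_ X X' X'').inv ≫ ((β_ X X').hom ▷ X'') ≫
    (ε_ X X' ▷ X'') ≫ (λ_ X'').hom

section

variable [RigidCategory B]

noncomputable def wMor (X X' X'' : B) [ExactPairing X X'] [ExactPairing X' X''] :
    X'' ⟶ X :=
  (λ_ X'').inv ≫ (η_ X X' ▷ X'') ≫ (α_ X X' X'').hom ≫ (X ◁ (β_ X'' X').inv) ≫
    (X ◁ ε_ X' X'') ≫ (ρ_ X).hom

lemma drinfeld_cap (X X' X'' : B) [ExactPairing X X'] [ExactPairing X' X''] :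
    drinfeldMor X X' X'' ▷ X' ≫ ε_ X' X'' = (β_ X X').hom ≫ ε_ X X' :=
  calc drinfeldMor X X' X'' ▷ X' ≫ ε_ X' X''
    _ = 𝟙 _ ⊗≫ X ◁ η_ X' X'' ▷ X' ⊗≫ (β_ X X').hom ▷ (X'' ⊗ X') ⊗≫
        (ε_ X X' ▷ (X'' ⊗ X') ≫ 𝟙_ B ◁ ε_ X' X'') ⊗≫ 𝟙 _ := by
      dsimp only [drinfeldMor]; monoidal
    _ = 𝟙 _ ⊗≫ X ◁ η_ X' X'' ▷ X' ⊗≫ ((β_ X X').hom ▷ (X'' ⊗ X') ≫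
        (X' ⊗ X) ◁ ε_ X' X'') ⊗≫ ε_ X X' := by
      rw [← whisker_exchange]; monoidal
    _ = 𝟙 _ ⊗≫ X ◁ (η_ X' X'' ▷ X' ⊗≫ X' ◁ ε_ X' X'') ⊗≫ (β_ X X').hom ≫ ε_ X X' := by
      rw [← whisker_exchange]; monoidal
    _ = (β_ X X').hom ≫ ε_ X X' := by
      rw [ExactPairing.evaluation_coevaluation'']; monoidal

lemma w_cap (X X' X'' : B) [ExactPairing X X'] [ExactPairing X' X''] :
    X' ◁ wMor X X' X'' ≫ ε_ X X' = (β_ X'' X').inv ≫ ε_ X' X'' :=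
  calc X' ◁ wMor X X' X'' ≫ ε_ X X'
    _ = 𝟙 _ ⊗≫ X' ◁ η_ X X' ▷ X'' ⊗≫ (X' ⊗ X) ◁ (β_ X'' X').inv ⊗≫
        ((X' ⊗ X) ◁ ε_ X' X'' ≫ ε_ X X' ▷ 𝟙_ B) ⊗≫ 𝟙 _ := by
      dsimp only [wMor]; monoidal
    _ = 𝟙 _ ⊗≫ X' ◁ η_ X X' ▷ X'' ⊗≫ ((X' ⊗ X) ◁ (β_ X'' X').inv ≫
        ε_ X X' ▷ (X'' ⊗ X')) ⊗≫ ε_ X' X'' := by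
      rw [whisker_exchange]; monoidal
    _ = 𝟙 _ ⊗≫ (X' ◁ η_ X X' ⊗≫ ε_ X X' ▷ X') ▷ X'' ⊗≫ (β_ X'' X').inv ≫ ε_ X' X'' := by
      rw [whisker_exchange]; monoidal
    _ = (β_ X'' X').inv ≫ ε_ X' X'' := by
      rw [ExactPairing.coevaluation_evaluation'']; monoidal

theorem w_inverse (X X' X'' : B) [ExactPairing X X'] [ExactPairing X' X''] :
    wMor X X' X'' ≫ drinfeldMor X X' X'' = 𝟙 X'' ∧
    drinfeldMor X X' X'' ≫ wMor X X' X'' = 𝟙 X := by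
  constructor
  · have key : wMor X X' X'' ▷ X' ≫ (β_ X X').hom ≫ ε_ X X' = ε_ X' X'' := by
      rw [BraidedCategory.braiding_naturality_left_assoc, w_cap, Iso.hom_inv_id_assoc]
    calc wMor X X' X'' ≫ drinfeldMor X X' X''
      _ = 𝟙 _ ⊗≫ (wMor X X' X'' ▷ 𝟙_ B ≫ X ◁ η_ X' X'') ⊗≫
          ((β_ X X').hom ≫ ε_ X X') ▷ X'' ⊗≫ 𝟙 _ := by
        dsimp only [drinfeldMor]; monoidal
      _ = 𝟙 _ ⊗≫ X'' ◁ η_ X' X'' ⊗≫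
          (wMor X X' X'' ▷ X' ≫ (β_ X X').hom ≫ ε_ X X') ▷ X'' ⊗≫ 𝟙 _ := by
        rw [← whisker_exchange]; monoidal
      _ = 𝟙 _ ⊗≫ (X'' ◁ η_ X' X'' ⊗≫ ε_ X' X'' ▷ X'') ⊗≫ 𝟙 _ := by
        rw [key]; monoidal
      _ = 𝟙 X'' := by
        rw [ExactPairing.coevaluation_evaluation'']; monoidal
  · have key : X' ◁ drinfeldMor X X' X'' ≫ (β_ X'' X').inv ≫ ε_ X' X'' = ε_ X X' := by
      rw [BraidedCategory.braiding_inv_naturality_right_assoc, drinfeld_cap, Iso.inv_hom_id_assoc]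
    calc drinfeldMor X X' X'' ≫ wMor X X' X''
      _ = 𝟙 _ ⊗≫ (𝟙_ B ◁ drinfeldMor X X' X'' ≫ η_ X X' ▷ X'') ⊗≫
          X ◁ ((β_ X'' X').inv ≫ ε_ X' X'') ⊗≫ 𝟙 _ := by
        dsimp only [wMor]; monoidal
      _ = 𝟙 _ ⊗≫ η_ X X' ▷ X ⊗≫
          X ◁ (X' ◁ drinfeldMor X X' X'' ≫ (β_ X'' X').inv ≫ ε_ X' X'') ⊗≫ 𝟙 _ := by
        rw [whisker_exchange]; monoidal
      _ = 𝟙 _ ⊗≫ (η_ X X' ▷ X ⊗≫ X ◁ ε_ X X') ⊗≫ 𝟙 _ := by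
        rw [key]; monoidal
      _ = 𝟙 X := by
        rw [ExactPairing.evaluation_coevaluation'']; monoidal

/-- `v_X = (id ⊗ eval'_X) ∘ (id ⊗ σ_{X,ᘁX}⁻¹) ∘ (coev'_{ᘁX} ⊗ id) : X ⟶ ᘁᘁX`. -/
noncomputable def vMor (X : B) : X ⟶ (ᘁ(ᘁX) : B) :=
  (λ_ X).inv ≫ (η_ (ᘁ(ᘁX)) (ᘁX) ▷ X) ≫ (α_ (ᘁ(ᘁX) : B) (ᘁX : B) X).hom ≫
    ((ᘁ(ᘁX) : B) ◁ (β_ X (ᘁX : B)).inv) ≫ ((ᘁ(ᘁX) : B) ◁ ε_ (ᘁX) X) ≫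
    (ρ_ (ᘁ(ᘁX) : B)).hom

/-- `v_X` is inverse to the Drinfeld isomorphism of `ᘁᘁX` (composed with the
canonical identification of its double dual with `X`). -/
theorem vMor_inverse_drinfeld (X : B) :
    vMor X ≫ drinfeldMor (ᘁ(ᘁX)) (ᘁX) X = 𝟙 X ∧
    drinfeldMor (ᘁ(ᘁX)) (ᘁX) X ≫ vMor X = 𝟙 (ᘁ(ᘁX) : B) := by
  have hv : vMor X = wMor (ᘁ(ᘁX)) (ᘁX) X := rfl
  rw [hv]
  exact w_inverse (ᘁ(ᘁX)) (ᘁX) X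
end
end

section
/- Let C be a monoidal category and F : C → C a strong monoidal functor that is an equivalence of categories, with structure isomorphisms F₂(X,Y) : F(X) ⊗ F(Y) ≅ F(X ⊗ Y). Then for every object (V, σ) of the Drinfeld center Z(C), there exists a unique half-braiding σ' on F(V) such that for every object X of C one has F₂(X, V) ∘ σ'_{F(X)} = F(σ_X) ∘ F₂(V, X) as morphisms F(V) ⊗ F(X) ⟶ F(X ⊗ V). -/
/-!
On an object `F X` the required identity forces `σ'_{F X} = F₂(X, V)⁻¹ ∘ F(σ_X) ∘ F₂(V, X)`,
and as `F` is essentially surjective, naturality pins down every other component: this is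
uniqueness. For existence, these components are natural in `X`, so they lift along the
equivalence of functor categories given by precomposition with `F`. The hexagon identity
holds on pairs `(F a, F a')` because `F` is monoidal, and transfers to arbitrary pairs
along isomorphisms `U ≅ F a`, `U' ≅ F a'`.
-/

open CategoryTheory MonoidalCategory Functor.LaxMonoidal

variable {C : Type*} [Category C] [MonoidalCategory C]

open Functor.OplaxMonoidal

namespace CategoryTheory.HalfBraiding

variable {D : Type*} [Category D]

theorem ext_of_essSurj (F : D ⥤ C) [F.EssSurj] {A : C} {σ τ : HalfBraiding A}
    (h : ∀ X, (σ.β (F.obj X)).hom = (τ.β (F.obj X)).hom) : σ = τ := by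
  have hβ : σ.β = τ.β := funext fun U => Iso.ext <| by
    rw [← cancel_epi (A ◁ (F.objObjPreimageIso U).hom), σ.naturality, τ.naturality, h]
  cases σ; cases τ; cases hβ; rfl

theorem hexagon_of_isIso {A : C} (β : ∀ U, A ⊗ U ⟶ U ⊗ A)
    (nat : ∀ {X Y : C} (f : X ⟶ Y), A ◁ f ≫ β Y = β X ≫ f ▷ A) {U U' W W' : C}
    (e : U ⟶ W) (e' : U' ⟶ W') [IsIso e] [IsIso e']
    (h : β (U ⊗ U') = (α_ A U U').inv ≫ (β U ▷ U') ≫ (α_ U A U').hom ≫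
      (U ◁ β U') ≫ (α_ U U' A).inv) :
    β (W ⊗ W') = (α_ A W W').inv ≫ (β W ▷ W') ≫ (α_ W A W').hom ≫
      (W ◁ β W') ≫ (α_ W W' A).inv := by
  rw [← cancel_epi (A ◁ (e ⊗ₘ e')), nat, h]
  simp only [MonoidalCategory.tensorHom_def, MonoidalCategory.whiskerLeft_comp,
    comp_whiskerRight, Category.assoc]
  rw [associator_inv_naturality_right_assoc, associator_inv_naturality_middle_assoc,
    whisker_exchange_assoc, ← comp_whiskerRight_assoc, nat, comp_whiskerRight_assoc,
    associator_naturality_right_assoc, ← MonoidalCategory.whiskerLeft_comp_assoc, nat,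
    MonoidalCategory.whiskerLeft_comp_assoc, associator_naturality_left_assoc,
    ← whisker_exchange_assoc, associator_inv_naturality_middle,
    associator_inv_naturality_left_assoc]

variable [MonoidalCategory D] (F : C ⥤ D) [F.Monoidal] {V : C} (σ : HalfBraiding V)

noncomputable def mapβ (X : C) : F.obj V ⊗ F.obj X ≅ F.obj X ⊗ F.obj V :=
  Functor.Monoidal.μIso F V X ≪≫ F.mapIso (σ.β X) ≪≫ (Functor.Monoidal.μIso F X V).symm

theorem mapβ_hom (X : C) : (σ.mapβ F X).hom = μ F V X ≫ F.map (σ.β X).hom ≫ δ F X V := rfl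

theorem mapβ_naturality {X Y : C} (f : X ⟶ Y) :
    F.obj V ◁ F.map f ≫ (σ.mapβ F Y).hom = (σ.mapβ F X).hom ≫ F.map f ▷ F.obj V := by
  rw [mapβ_hom, mapβ_hom, μ_natural_right_assoc, ← F.map_comp_assoc, σ.naturality,
    F.map_comp_assoc, ← δ_natural_left, Category.assoc, Category.assoc]

theorem mapβ_tensor (a a' : C) :
    F.obj V ◁ μ F a a' ≫ (σ.mapβ F (a ⊗ a')).hom ≫ δ F a a' ▷ F.obj V =
      (α_ _ _ _).inv ≫ ((σ.mapβ F a).hom ▷ F.obj a') ≫ (α_ _ _ _).hom ≫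
        (F.obj a ◁ (σ.mapβ F a').hom) ≫ (α_ _ _ _).inv := by
  simp only [mapβ_hom, HalfBraiding.monoidal, F.map_comp, Functor.Monoidal.map_whiskerRight,
    Functor.Monoidal.map_whiskerLeft, Functor.Monoidal.map_associator,
    Functor.Monoidal.map_associator_inv, Category.assoc, Functor.Monoidal.μ_δ_assoc,
    Functor.Monoidal.whiskerLeft_μ_δ_assoc, Functor.Monoidal.whiskerRight_μ_δ,
    comp_whiskerRight, MonoidalCategory.whiskerLeft_comp, Category.comp_id]

variable [F.IsEquivalence]

noncomputable def mapNatIso : tensorLeft (F.obj V) ≅ tensorRight (F.obj V) :=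
  ((Functor.whiskeringLeft C D D).obj F).preimageIso
    (NatIso.ofComponents (σ.mapβ F) (σ.mapβ_naturality F))

theorem mapNatIso_hom_app_obj (X : C) : (σ.mapNatIso F).hom.app (F.obj X) = (σ.mapβ F X).hom :=
  congr_arg (fun η => NatTrans.app η X)
    (((Functor.whiskeringLeft C D D).obj F).map_preimage _)

theorem mapNatIso_hom_app_tensor_obj (a a' : C) :
    (σ.mapNatIso F).hom.app (F.obj a ⊗ F.obj a') =
      (α_ _ _ _).inv ≫ ((σ.mapNatIso F).hom.app (F.obj a) ▷ F.obj a') ≫ (α_ _ _ _).hom ≫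
        (F.obj a ◁ (σ.mapNatIso F).hom.app (F.obj a')) ≫ (α_ _ _ _).inv := by
  have nat : F.obj V ◁ μ F a a' ≫ (σ.mapNatIso F).hom.app (F.obj (a ⊗ a')) =
      (σ.mapNatIso F).hom.app (F.obj a ⊗ F.obj a') ≫ μ F a a' ▷ F.obj V :=
    (σ.mapNatIso F).hom.naturality (μ F a a')
  rw [mapNatIso_hom_app_obj, mapNatIso_hom_app_obj, ← mapβ_tensor, ← mapNatIso_hom_app_obj,
    reassoc_of% nat, Functor.Monoidal.whiskerRight_μ_δ]
  exact (Category.comp_id _).symm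

noncomputable def map : HalfBraiding (F.obj V) where
  β := (σ.mapNatIso F).app
  monoidal U U' :=
    hexagon_of_isIso (fun U => (σ.mapNatIso F).hom.app U)
      (fun f => (σ.mapNatIso F).hom.naturality f)
      (F.objObjPreimageIso U).hom (F.objObjPreimageIso U').hom
      (σ.mapNatIso_hom_app_tensor_obj F _ _)
  naturality f := (σ.mapNatIso F).hom.naturality f

theorem map_β_hom_comp_μ (X : C) :
    ((σ.map F).β (F.obj X)).hom ≫ μ F X V = μ F V X ≫ F.map (σ.β X).hom := by
  simp [map, mapNatIso_hom_app_obj, mapβ_hom]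

end CategoryTheory.HalfBraiding

/-- A strong monoidal autoequivalence of `C` sends a half-braiding on `V` (i.e. an
object of the Drinfeld center) to a unique half-braiding on `F(V)` compatible with
the tensorator of `F`. -/
theorem exists_unique_halfBraiding_of_monoidal_equivalence
    (F : C ⥤ C) [F.Monoidal] [F.IsEquivalence] (V : C) (σ : HalfBraiding V) :
    ∃! σ' : HalfBraiding (F.obj V), ∀ X : C,
      (σ'.β (F.obj X)).hom ≫ μ F X V = μ F V X ≫ F.map (σ.β X).hom := by
  refine ⟨σ.map F, σ.map_β_hom_comp_μ F, fun τ hτ => HalfBraiding.ext_of_essSurj F fun X => ?_⟩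
  rw [← cancel_mono (μ F X V), hτ, σ.map_β_hom_comp_μ F]
end
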